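/- arXiv:2301.13831 — 14 statements merged into one kernel-verified Lean document; each statement's English description precedes it below -/
import Mathlib

section
/- Let R = α • 1 be a nonzero scalar multiple of the identity matrix in Matrix (Fin 2 × Fin 2) (Fin 2 × Fin 2) ℂ (α ∈ ℂ, α ≠ 0), and let S be any matrix in Matrix (Fin 2 × Fin 2) (Fin 2 × Fin 2) ℂ. Then the pair (S,R) satisfies the loop braid relations if and only if S = 1 or S = -1. -/
open Matrix

noncomputable section

/-- The width-3 matrix `M₁ = M ⊗ 1`. -/
def Lone {N : ℕ} (M : Matrix (Fin N × Fin N) (Fin N × Fin N) ℂ) :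
    Matrix (Fin N × Fin N × Fin N) (Fin N × Fin N × Fin N) ℂ :=
  Matrix.of fun p q =>
    M (p.1, p.2.1) (q.1, q.2.1) * (if p.2.2 = q.2.2 then (1 : ℂ) else 0)

/-- The width-3 matrix `M₂ = 1 ⊗ M`. -/
def Ltwo {N : ℕ} (M : Matrix (Fin N × Fin N) (Fin N × Fin N) ℂ) :
    Matrix (Fin N × Fin N × Fin N) (Fin N × Fin N × Fin N) ℂ :=
  Matrix.of fun p q =>
    (if p.1 = q.1 then (1 : ℂ) else 0) * M (p.2.1, p.2.2) (q.2.1, q.2.2)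

/-- The pair (S,R) satisfies the loop braid relations. -/
def LoopBraid {N : ℕ} (S R : Matrix (Fin N × Fin N) (Fin N × Fin N) ℂ) : Prop :=
  S * S = 1 ∧
  Lone S * Ltwo S * Lone S = Ltwo S * Lone S * Ltwo S ∧
  Lone R * Ltwo R * Lone R = Ltwo R * Lone R * Ltwo R ∧
  Lone R * Ltwo R * Lone S = Ltwo S * Lone R * Ltwo R ∧
  Lone R * Ltwo S * Lone S = Ltwo S * Lone S * Ltwo R

/-- A width-2 rank-N matrix is charge-conserving. -/
def ChargeConserving {N : ℕ} (M : Matrix (Fin N × Fin N) (Fin N × Fin N) ℂ) : Prop :=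
  ∀ k l i j : Fin N, M (k, l) (i, j) ≠ 0 → ((k, l) = (i, j) ∨ (k, l) = (j, i))

/-- The element of `Fin 2` labelled `1`. -/
def e1 : Fin 2 := 0
/-- The element of `Fin 2` labelled `2`. -/
def e2 : Fin 2 := 1


/-!
For `R = α • 1` both `R₁` and `R₂` equal `α • 1`, so the relation `R₁ R₂ S₁ = S₂ R₁ R₂` reads
`α² S₁ = α² S₂`, i.e. `S ⊗ 1 = 1 ⊗ S`. Comparing entries, this forces `S` to be a scalar `c • 1`,
and `S * S = 1` leaves `c = ±1`. Conversely, when `S` and `R` are both scalars every relation is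
an identity between products of commuting scalars.
-/

section TensorWithIdentity

variable {N : ℕ}

@[simp]
lemma Lone_smul_one (c : ℂ) :
    Lone (c • 1 : Matrix (Fin N × Fin N) (Fin N × Fin N) ℂ) = c • 1 := by
  ext ⟨a, b, d⟩ ⟨a', b', d'⟩
  simp only [Lone, of_apply, Matrix.smul_apply, Matrix.one_apply, Prod.mk.injEq, smul_eq_mul]
  split_ifs <;> simp_all

@[simp]
lemma Ltwo_smul_one (c : ℂ) :
    Ltwo (c • 1 : Matrix (Fin N × Fin N) (Fin N × Fin N) ℂ) = c • 1 := by
  ext ⟨a, b, d⟩ ⟨a', b', d'⟩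
  simp only [Ltwo, of_apply, Matrix.smul_apply, Matrix.one_apply, Prod.mk.injEq, smul_eq_mul]
  split_ifs <;> simp_all

lemma eq_smul_one_of_Lone_eq_Ltwo [NeZero N] {S : Matrix (Fin N × Fin N) (Fin N × Fin N) ℂ}
    (h : Lone S = Ltwo S) : S = S (0, 0) (0, 0) • 1 := by
  have hentry : ∀ a b a' b' : Fin N,
      S (a, b) (a', b') = (if a = a' then 1 else 0) * S (b, 0) (b', 0) := by
    intro a b a' b'
    simpa [Lone, Ltwo] using congrFun (congrFun h (a, b, 0)) (a', b', 0)
  ext ⟨a, b⟩ ⟨a', b'⟩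
  rw [hentry a b a' b', hentry b 0 b' 0, Matrix.smul_apply, Matrix.one_apply]
  clear hentry
  split_ifs <;> simp_all

end TensorWithIdentity

section LoopBraidScalarR

variable {N : ℕ} {S : Matrix (Fin N × Fin N) (Fin N × Fin N) ℂ} {α : ℂ}

lemma Lone_eq_Ltwo_of_loopBraid_smul_one (hα : α ≠ 0) (h : LoopBraid S (α • 1)) :
    Lone S = Ltwo S := by
  have h4 := h.2.2.2.1
  simp only [Lone_smul_one, Ltwo_smul_one, Matrix.smul_mul, Matrix.mul_smul, one_mul, mul_one,
    smul_smul] at h4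
  exact smul_right_injective _ (mul_ne_zero hα hα) h4

lemma loopBraid_smul_one {c : ℂ} (hc : c * c = 1) :
    LoopBraid (c • 1) (α • 1 : Matrix (Fin N × Fin N) (Fin N × Fin N) ℂ) := by
  refine ⟨by simp [smul_smul, hc], ?_, ?_, ?_, ?_⟩ <;>
    simp only [Lone_smul_one, Ltwo_smul_one, smul_mul_smul_comm, mul_one] <;>
    congr 1 <;> ring

theorem loopBraid_smul_one_iff [NeZero N] (hα : α ≠ 0) :
    LoopBraid S (α • 1) ↔ S = 1 ∨ S = -1 := by
  constructor
  · intro h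
    have hS := eq_smul_one_of_Lone_eq_Ltwo (Lone_eq_Ltwo_of_loopBraid_smul_one hα h)
    set c := S (0, 0) (0, 0)
    have hc : c * c = 1 := by
      simpa [hS, smul_smul] using congrFun (congrFun h.1 (0, 0)) (0, 0)
    rcases mul_self_eq_one_iff.mp hc with hc | hc <;> simp [hS, hc]
  · rintro (rfl | rfl)
    · simpa using loopBraid_smul_one (α := α) (N := N) (one_mul 1)
    · simpa using loopBraid_smul_one (α := α) (N := N) (c := -1) (by norm_num)

end LoopBraidScalarR

theorem stmt0 (α : ℂ) (hα : α ≠ 0)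
    (R S : Matrix (Fin 2 × Fin 2) (Fin 2 × Fin 2) ℂ)
    (hR : R = α • (1 : Matrix (Fin 2 × Fin 2) (Fin 2 × Fin 2) ℂ)) :
    LoopBraid S R ↔ (S = 1 ∨ S = -1) := by
  subst hR
  exact loopBraid_smul_one_iff hα
end
end

section
/- Let α, β, χ ∈ ℂ with α ≠ 0, β ≠ 0, χ ≠ 0, α + β ≠ 0 and α ≠ β, and let R be the width-2 rank-2 matrix of type f, with entries R (1,1) (1,1) = α, R (2,2) (2,2) = α, R (2,1) (2,1) = α + β, R (2,1) (1,2) = χ, R (1,2) (2,1) = -α*β/χ, R (1,2) (1,2) = 0, and all other entries 0. Then there is no charge-conserving matrix S in Matrix (Fin 2 × Fin 2) (Fin 2 × Fin 2) ℂ such that the pair (S,R) satisfies the loop braid relations. -/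
open Matrix

noncomputable section

set_option maxHeartbeats 2000000 in
theorem stmt1 (α β χ : ℂ) (hα : α ≠ 0) (hβ : β ≠ 0) (hχ : χ ≠ 0)
    (hab : α + β ≠ 0) (hne : α ≠ β)
    (R : Matrix (Fin 2 × Fin 2) (Fin 2 × Fin 2) ℂ)
    (hR : R = Matrix.of fun p q =>
      if p = (e1, e1) ∧ q = (e1, e1) then α
      else if p = (e2, e2) ∧ q = (e2, e2) then α
      else if p = (e2, e1) ∧ q = (e2, e1) then α + β
      else if p = (e2, e1) ∧ q = (e1, e2) then χ
      else if p = (e1, e2) ∧ q = (e2, e1) then -α * β / χ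
      else 0) :
    ¬ ∃ S : Matrix (Fin 2 × Fin 2) (Fin 2 × Fin 2) ℂ,
        ChargeConserving S ∧ LoopBraid S R := by
  rintro ⟨S, hCC, h1, -, -, h4, h5⟩
  have hz : ∀ k l i j : Fin 2, ((k,l) ≠ (i,j)) → ((k,l) ≠ (j,i)) → S (k, l) (i, j) = 0 := by
    intro k l i j n1 n2
    by_contra h
    rcases hCC k l i j h with h' | h'
    · exact n1 h'
    · exact n2 h'
  have z1 : S (0,0) (0,1) = 0 := hz 0 0 0 1 (by decide) (by decide)
  have z2 : S (0,0) (1,0) = 0 := hz 0 0 1 0 (by decide) (by decide)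
  have z3 : S (0,0) (1,1) = 0 := hz 0 0 1 1 (by decide) (by decide)
  have z4 : S (0,1) (0,0) = 0 := hz 0 1 0 0 (by decide) (by decide)
  have z5 : S (0,1) (1,1) = 0 := hz 0 1 1 1 (by decide) (by decide)
  have z6 : S (1,0) (0,0) = 0 := hz 1 0 0 0 (by decide) (by decide)
  have z7 : S (1,0) (1,1) = 0 := hz 1 0 1 1 (by decide) (by decide)
  have z8 : S (1,1) (0,0) = 0 := hz 1 1 0 0 (by decide) (by decide)
  have z9 : S (1,1) (0,1) = 0 := hz 1 1 0 1 (by decide) (by decide)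
  have z10 : S (1,1) (1,0) = 0 := hz 1 1 1 0 (by decide) (by decide)
  have Ea := Matrix.ext_iff.2 h1 ((0:Fin 2),(0:Fin 2)) ((0:Fin 2),(0:Fin 2))
  have Eb := Matrix.ext_iff.2 h1 ((0:Fin 2),(1:Fin 2)) ((1:Fin 2),(0:Fin 2))
  have Ec := Matrix.ext_iff.2 h1 ((1:Fin 2),(0:Fin 2)) ((1:Fin 2),(0:Fin 2))
  have E1 := Matrix.ext_iff.2 h4 ((1:Fin 2),(0:Fin 2),(0:Fin 2)) ((0:Fin 2),(1:Fin 2),(0:Fin 2))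
  have E2 := Matrix.ext_iff.2 h4 ((1:Fin 2),(0:Fin 2),(0:Fin 2)) ((1:Fin 2),(0:Fin 2),(0:Fin 2))
  have E3 := Matrix.ext_iff.2 h4 ((1:Fin 2),(0:Fin 2),(1:Fin 2)) ((1:Fin 2),(1:Fin 2),(0:Fin 2))
  have E4 := Matrix.ext_iff.2 h4 ((1:Fin 2),(1:Fin 2),(0:Fin 2)) ((1:Fin 2),(1:Fin 2),(0:Fin 2))
  have E5 := Matrix.ext_iff.2 h5 ((1:Fin 2),(0:Fin 2),(0:Fin 2)) ((0:Fin 2),(1:Fin 2),(0:Fin 2))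
  have E6 := Matrix.ext_iff.2 h5 ((1:Fin 2),(0:Fin 2),(0:Fin 2)) ((1:Fin 2),(0:Fin 2),(0:Fin 2))
  simp only [Lone, Ltwo, Matrix.mul_apply, Matrix.one_apply, Fintype.sum_prod_type,
    Fin.sum_univ_two, hR, e1, e2, Matrix.of_apply, Prod.mk.injEq,
    z1,z2,z3,z4,z5,z6,z7,z8,z9,z10] at Ea Eb Ec E1 E2 E3 E4 E5 E6
  norm_num [-Prod.mk_zero_zero, -Prod.mk_one_one] at Ea Eb Ec E1 E2 E3 E4 E5 E6
  set a := S (0,0) (0,0) with hadef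
  set b := S (1,1) (1,1) with hbdef
  set c := S (0,1) (0,1) with hcdef
  set d := S (0,1) (1,0) with hddef
  set e := S (1,0) (0,1) with hedef
  set f := S (1,0) (1,0) with hfdef
  -- Ea : a * a = 1, Eb : c*d + d*f = 0, Ec : e*d + f*f = 1
  have hcf0 : χ * (c * f) = 0 := by linear_combination E5
  have hcf : c * f = 0 := (mul_eq_zero.mp hcf0).resolve_left hχ
  have ha0 : a ≠ 0 := by
    intro h
    rw [h] at Ea
    simp at Ea
  by_cases hf : f = 0
  · -- case f = 0
    field_simp at E3 E4
    have C1 : χ * c + α * e = χ * a :=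
      mul_right_cancel₀ hab (by linear_combination E1)
    have C2 : χ * d + α * f = α * a :=
      mul_right_cancel₀ hab (by linear_combination E2)
    have C3 : χ * d = (c - b) * β :=
      mul_right_cancel₀ (mul_ne_zero (mul_ne_zero hα hab) hχ) (by linear_combination (-(α * (α + β) * χ)) * E3)
    have C4 : β * e = χ * f - χ * b :=
      mul_right_cancel₀ (mul_ne_zero hα hab) (by linear_combination (α * (α + β)) * E4)
    have G1 : (a - b) * ((β - α) * χ) = 0 := by
      linear_combination (-β) * C1 + α * C4 - χ * C3 + χ * C2
    rcases mul_eq_zero.mp G1 with h | h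
    · have hba : a = b := sub_eq_zero.mp h
      have G2 : (α + β) * χ = 0 := by
        linear_combination (-(β*χ)) * Ec + (d*χ) * C4 - (b*χ - f*χ) * C2
          + (a*α*χ) * hba - (α*χ) * Ea + (f*β*χ + b*α*χ - f*α*χ + a*α*χ) * hf
      exact mul_ne_zero hab hχ G2
    · rcases mul_eq_zero.mp h with h' | h'
      · exact hne (sub_eq_zero.mp h').symm
      · exact hχ h'
  · -- case f ≠ 0, so c = 0
    have hc : c = 0 := (mul_eq_zero.mp hcf).resolve_right hf
    have hdf : d * f = 0 := by linear_combination Eb - d * hc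
    have hd : d = 0 := (mul_eq_zero.mp hdf).resolve_right hf
    have hafb : a * f * β = 0 := by linear_combination E6 - χ * f * hd
    rcases mul_eq_zero.mp hafb with h | h
    · rcases mul_eq_zero.mp h with h' | h'
      · exact ha0 h'
      · exact hf h'
    · exact hβ h
end
end

section
/- Let A₁, A₂, c ∈ ℂ with A₁ ≠ 0, A₂ ≠ 0, c ≠ 0 and A₁ + A₂ ≠ 0. Define width-2 rank-2 matrices S and R by: S (1,1) (1,1) = 1, S (2,2) (2,2) = -1, S (1,2) (2,1) = c, S (2,1) (1,2) = 1/c, all other entries of S equal to 0; and R (1,1) (1,1) = A₁, R (2,2) (2,2) = A₂, R (2,1) (2,1) = A₁ + A₂, R (2,1) (1,2) = A₁/c, R (1,2) (2,1) = -c*A₂, R (1,2) (1,2) = 0, all other entries of R equal to 0. Then the pair (S,R) satisfies the loop braid relations. -/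
open Matrix

noncomputable section

/-!
An entry of `M₁ * N₂ * P₁` or `M₂ * N₁ * P₂` is a sum of eight products of three entries of
`M`, `N`, `P`. Each loop braid relation therefore amounts to finitely many identities between
Laurent polynomials in `c` with coefficients polynomial in `A₁, A₂`, checked entry by entry.
-/

def superFlip (c : ℂ) : Matrix (Fin 2 × Fin 2) (Fin 2 × Fin 2) ℂ :=
  Matrix.of fun p q =>
    if p = (e1, e1) ∧ q = (e1, e1) then 1
    else if p = (e2, e2) ∧ q = (e2, e2) then -1
    else if p = (e1, e2) ∧ q = (e2, e1) then c
    else if p = (e2, e1) ∧ q = (e1, e2) then 1 / c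
    else 0

def rMatrix (A₁ A₂ c : ℂ) : Matrix (Fin 2 × Fin 2) (Fin 2 × Fin 2) ℂ :=
  Matrix.of fun p q =>
    if p = (e1, e1) ∧ q = (e1, e1) then A₁
    else if p = (e2, e2) ∧ q = (e2, e2) then A₂
    else if p = (e2, e1) ∧ q = (e2, e1) then A₁ + A₂
    else if p = (e2, e1) ∧ q = (e1, e2) then A₁ / c
    else if p = (e1, e2) ∧ q = (e2, e1) then -c * A₂
    else 0

section TripleProduct

variable {n : ℕ} (M N P : Matrix (Fin n × Fin n) (Fin n × Fin n) ℂ) (a b g d e f : Fin n)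

theorem Lone_mul_Ltwo_mul_Lone_apply :
    (Lone M * Ltwo N * Lone P) (a, b, g) (d, e, f) =
      ∑ u, ∑ v, ∑ y, M (a, b) (u, y) * N (y, g) (v, f) * P (u, v) (d, e) := by
  simp [Matrix.mul_apply, Lone, Ltwo, Fintype.sum_prod_type, mul_ite, ite_mul, Finset.sum_mul]

theorem Ltwo_mul_Lone_mul_Ltwo_apply :
    (Ltwo M * Lone N * Ltwo P) (a, b, g) (d, e, f) =
      ∑ v, ∑ w, ∑ y, M (b, g) (y, w) * N (a, y) (d, v) * P (v, w) (e, f) := by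
  simp [Matrix.mul_apply, Lone, Ltwo, Fintype.sum_prod_type, mul_ite, ite_mul, Finset.sum_mul]

end TripleProduct

theorem superFlip_mul_self {c : ℂ} (hc : c ≠ 0) : superFlip c * superFlip c = 1 := by
  ext ⟨a, b⟩ ⟨d, e⟩
  fin_cases a <;> fin_cases b <;> fin_cases d <;> fin_cases e <;>
    simp [Matrix.mul_apply, superFlip, e1, e2, hc]

theorem superFlip_braid (c : ℂ) :
    Lone (superFlip c) * Ltwo (superFlip c) * Lone (superFlip c) =
      Ltwo (superFlip c) * Lone (superFlip c) * Ltwo (superFlip c) := by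
  ext ⟨a, b, g⟩ ⟨d, e, f⟩
  rw [Lone_mul_Ltwo_mul_Lone_apply, Ltwo_mul_Lone_mul_Ltwo_apply]
  fin_cases a <;> fin_cases b <;> fin_cases g <;> fin_cases d <;> fin_cases e <;> fin_cases f <;>
    simp [Fin.sum_univ_two, superFlip, e1, e2] <;> ring

theorem rMatrix_braid {c : ℂ} (hc : c ≠ 0) (A₁ A₂ : ℂ) :
    Lone (rMatrix A₁ A₂ c) * Ltwo (rMatrix A₁ A₂ c) * Lone (rMatrix A₁ A₂ c) =
      Ltwo (rMatrix A₁ A₂ c) * Lone (rMatrix A₁ A₂ c) * Ltwo (rMatrix A₁ A₂ c) := by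
  ext ⟨a, b, g⟩ ⟨d, e, f⟩
  rw [Lone_mul_Ltwo_mul_Lone_apply, Ltwo_mul_Lone_mul_Ltwo_apply]
  fin_cases a <;> fin_cases b <;> fin_cases g <;> fin_cases d <;> fin_cases e <;> fin_cases f <;>
    simp [Fin.sum_univ_two, rMatrix, e1, e2] <;> field_simp <;> ring

theorem rMatrix_rMatrix_superFlip {c : ℂ} (hc : c ≠ 0) (A₁ A₂ : ℂ) :
    Lone (rMatrix A₁ A₂ c) * Ltwo (rMatrix A₁ A₂ c) * Lone (superFlip c) =
      Ltwo (superFlip c) * Lone (rMatrix A₁ A₂ c) * Ltwo (rMatrix A₁ A₂ c) := by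
  ext ⟨a, b, g⟩ ⟨d, e, f⟩
  rw [Lone_mul_Ltwo_mul_Lone_apply, Ltwo_mul_Lone_mul_Ltwo_apply]
  fin_cases a <;> fin_cases b <;> fin_cases g <;> fin_cases d <;> fin_cases e <;> fin_cases f <;>
    simp [Fin.sum_univ_two, rMatrix, superFlip, e1, e2] <;> field_simp

theorem rMatrix_superFlip_superFlip (A₁ A₂ c : ℂ) :
    Lone (rMatrix A₁ A₂ c) * Ltwo (superFlip c) * Lone (superFlip c) =
      Ltwo (superFlip c) * Lone (superFlip c) * Ltwo (rMatrix A₁ A₂ c) := by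
  ext ⟨a, b, g⟩ ⟨d, e, f⟩
  rw [Lone_mul_Ltwo_mul_Lone_apply, Ltwo_mul_Lone_mul_Ltwo_apply]
  fin_cases a <;> fin_cases b <;> fin_cases g <;> fin_cases d <;> fin_cases e <;> fin_cases f <;>
    simp [Fin.sum_univ_two, rMatrix, superFlip, e1, e2] <;> ring

theorem stmt2_general (A₁ A₂ c : ℂ) (hc : c ≠ 0)
    (S R : Matrix (Fin 2 × Fin 2) (Fin 2 × Fin 2) ℂ)
    (hS : S = Matrix.of fun p q =>
      if p = (e1, e1) ∧ q = (e1, e1) then 1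
      else if p = (e2, e2) ∧ q = (e2, e2) then -1
      else if p = (e1, e2) ∧ q = (e2, e1) then c
      else if p = (e2, e1) ∧ q = (e1, e2) then 1 / c
      else 0)
    (hR : R = Matrix.of fun p q =>
      if p = (e1, e1) ∧ q = (e1, e1) then A₁
      else if p = (e2, e2) ∧ q = (e2, e2) then A₂
      else if p = (e2, e1) ∧ q = (e2, e1) then A₁ + A₂
      else if p = (e2, e1) ∧ q = (e1, e2) then A₁ / c
      else if p = (e1, e2) ∧ q = (e2, e1) then -c * A₂
      else 0) :
    LoopBraid S R := by
  subst hS hR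
  exact ⟨superFlip_mul_self hc, superFlip_braid c, rMatrix_braid hc A₁ A₂,
    rMatrix_rMatrix_superFlip hc A₁ A₂, rMatrix_superFlip_superFlip A₁ A₂ c⟩

theorem stmt2 (A₁ A₂ c : ℂ) (hA₁ : A₁ ≠ 0) (hA₂ : A₂ ≠ 0) (hc : c ≠ 0)
    (hsum : A₁ + A₂ ≠ 0)
    (S R : Matrix (Fin 2 × Fin 2) (Fin 2 × Fin 2) ℂ)
    (hS : S = Matrix.of fun p q =>
      if p = (e1, e1) ∧ q = (e1, e1) then 1
      else if p = (e2, e2) ∧ q = (e2, e2) then -1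
      else if p = (e1, e2) ∧ q = (e2, e1) then c
      else if p = (e2, e1) ∧ q = (e1, e2) then 1 / c
      else 0)
    (hR : R = Matrix.of fun p q =>
      if p = (e1, e1) ∧ q = (e1, e1) then A₁
      else if p = (e2, e2) ∧ q = (e2, e2) then A₂
      else if p = (e2, e1) ∧ q = (e2, e1) then A₁ + A₂
      else if p = (e2, e1) ∧ q = (e1, e2) then A₁ / c
      else if p = (e1, e2) ∧ q = (e2, e1) then -c * A₂
      else 0) :
    LoopBraid S R :=
  stmt2_general A₁ A₂ c hc S R hS hR
end
end

section
/- Let α, β, χ ∈ ℂ with α ≠ 0, β ≠ 0, χ ≠ 0 and α + β ≠ 0, and let R be the width-2 rank-2 matrix of type a with entries R (1,1) (1,1) = α, R (2,2) (2,2) = β, R (2,1) (2,1) = α + β, R (2,1) (1,2) = χ, R (1,2) (2,1) = -α*β/χ, R (1,2) (1,2) = 0, and all other entries 0. Suppose S is a charge-conserving matrix in Matrix (Fin 2 × Fin 2) (Fin 2 × Fin 2) ℂ such that the pair (S,R) satisfies the loop braid relations. Then there exists s₀ ∈ {1, -1} such that S (1,1) (1,1) = s₀, S (2,2) (2,2)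 = -s₀, S (2,1) (2,1) = 0, S (1,2) (1,2) = 0, S (1,2) (2,1) = s₀*α/χ and S (2,1) (1,2) = s₀*χ/α. -/
open Matrix

noncomputable section

set_option maxHeartbeats 2000000

theorem stmt3 (α β χ : ℂ) (hα : α ≠ 0) (hβ : β ≠ 0) (hχ : χ ≠ 0)
    (hab : α + β ≠ 0)
    (R : Matrix (Fin 2 × Fin 2) (Fin 2 × Fin 2) ℂ)
    (hR : R = Matrix.of fun p q =>
      if p = (e1, e1) ∧ q = (e1, e1) then α
      else if p = (e2, e2) ∧ q = (e2, e2) then β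
      else if p = (e2, e1) ∧ q = (e2, e1) then α + β
      else if p = (e2, e1) ∧ q = (e1, e2) then χ
      else if p = (e1, e2) ∧ q = (e2, e1) then -α * β / χ
      else 0)
    (S : Matrix (Fin 2 × Fin 2) (Fin 2 × Fin 2) ℂ)
    (hcc : ChargeConserving S) (hlb : LoopBraid S R) :
    ∃ s₀ : ℂ, (s₀ = 1 ∨ s₀ = -1) ∧
      S (e1, e1) (e1, e1) = s₀ ∧
      S (e2, e2) (e2, e2) = -s₀ ∧
      S (e2, e1) (e2, e1) = 0 ∧
      S (e1, e2) (e1, e2) = 0 ∧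
      S (e1, e2) (e2, e1) = s₀ * α / χ ∧
      S (e2, e1) (e1, e2) = s₀ * χ / α := by
  subst hR
  obtain ⟨hS2, -, -, h4, h5⟩ := hlb
  have hz : ∀ k l i j : Fin 2, ¬((k,l)=(i,j) ∨ (k,l)=(j,i)) → S (k,l) (i,j) = 0 := by
    intro k l i j h
    by_contra h'
    exact h (hcc k l i j h')
  have z1 : S (0,0) (0,1) = 0 := hz 0 0 0 1 (by decide)
  have z2 : S (0,0) (1,0) = 0 := hz 0 0 1 0 (by decide)
  have z3 : S (0,0) (1,1) = 0 := hz 0 0 1 1 (by decide)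
  have z4 : S (0,1) (0,0) = 0 := hz 0 1 0 0 (by decide)
  have z5 : S (0,1) (1,1) = 0 := hz 0 1 1 1 (by decide)
  have z6 : S (1,0) (0,0) = 0 := hz 1 0 0 0 (by decide)
  have z7 : S (1,0) (1,1) = 0 := hz 1 0 1 1 (by decide)
  have z8 : S (1,1) (0,0) = 0 := hz 1 1 0 0 (by decide)
  have z9 : S (1,1) (0,1) = 0 := hz 1 1 0 1 (by decide)
  have z10 : S (1,1) (1,0) = 0 := hz 1 1 1 0 (by decide)
  have h1 := congrFun (congrFun hS2 (0,0)) (0,0)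
  have h2 := congrFun (congrFun hS2 (1,0)) (1,0)
  have h3 := congrFun (congrFun hS2 (0,1)) (0,1)
  have e4 := congrFun (congrFun h5 ((0:Fin 2),(1:Fin 2),(0:Fin 2))) ((0:Fin 2),(0:Fin 2),(1:Fin 2))
  have e5 := congrFun (congrFun h4 ((1:Fin 2),(0:Fin 2),(0:Fin 2))) ((1:Fin 2),(0:Fin 2),(0:Fin 2))
  have e6 := congrFun (congrFun h4 ((1:Fin 2),(0:Fin 2),(0:Fin 2))) ((0:Fin 2),(1:Fin 2),(0:Fin 2))
  have e7 := congrFun (congrFun h4 ((1:Fin 2),(0:Fin 2),(1:Fin 2))) ((1:Fin 2),(1:Fin 2),(0:Fin 2))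
  simp only [Matrix.mul_apply, Fintype.sum_prod_type, Fin.sum_univ_two, Lone, Ltwo,
    Matrix.of_apply, Matrix.one_apply, e1, e2] at h1 h2 h3 e4 e5 e6 e7
  simp [z1,z2,z3,z4,z5,z6,z7,z8,z9,z10, Prod.ext_iff] at h1 h2 h3 e4 e5 e6 e7
  have htp : S (1,0) (1,0) * S (0,1) (0,1) = 0 :=
    by rcases e4 with (h | h) | h
       · simp [h]
       · simp [h]
       · exact absurd h hχ
  have hpt : S (1,0) (1,0) = 0 ∧ S (0,1) (0,1) = 0 := by
    rcases mul_eq_zero.mp htp with h | h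
    · refine ⟨h, mul_self_eq_zero.mp ?_⟩
      linear_combination h3 - h2 + S (1,0) (1,0) * h
    · refine ⟨mul_self_eq_zero.mp ?_, h⟩
      linear_combination h2 - h3 + S (0,1) (0,1) * h
  obtain ⟨hp, ht⟩ := hpt
  have hrχ : χ * S (0,1) (1,0) = S (0,0) (0,0) * α :=
    mul_left_cancel₀ hab (by linear_combination e5 - (α + β) * α * hp)
  have hqα : α * S (1,0) (0,1) = S (0,0) (0,0) * χ :=
    mul_left_cancel₀ hab (by linear_combination e6 - χ * (α + β) * ht)
  have hd : S (1,1) (1,1) = -S (0,0) (0,0) := by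
    have hne : (α + β) * (α * β) * χ ≠ 0 :=
      mul_ne_zero (mul_ne_zero hab (mul_ne_zero hα hβ)) hχ
    field_simp at e7
    apply mul_left_cancel₀ hne
    linear_combination -((α + β) * β * χ) * e7 - (α + β) * β * χ * hrχ + (α + β) * (α * β) * χ * ht
  have hr' : S (0,1) (1,0) = S (0,0) (0,0) * α / χ := by
    rw [eq_div_iff hχ]; linear_combination hrχ
  have hq' : S (1,0) (0,1) = S (0,0) (0,0) * χ / α := by
    rw [eq_div_iff hα]; linear_combination hqα
  exact ⟨S (0,0) (0,0), mul_self_eq_one_iff.mp h1, rfl, hd, hp, ht, hr', hq'⟩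
end
end

section
/- Let S be a charge-conserving matrix in Matrix (Fin 2 × Fin 2) (Fin 2 × Fin 2) ℂ satisfying S * S = 1 and the braid relation S₁ * S₂ * S₁ = S₂ * S₁ * S₂. Then either S = 1, or S = -1, or else S (2,1) (2,1) = 0, S (1,2) (1,2) = 0, S (1,1) (1,1) ^ 2 = 1, S (2,2) (2,2) ^ 2 = 1 and S (1,2) (2,1) * S (2,1) (1,2) = 1. -/
open Matrix

noncomputable section

/-! Charge conservation leaves six unknowns: the diagonal entries `a, b, c, d` of `S` at
`00, 01, 10, 11` and the swap entries `x = S 01 10`, `y = S 10 01`. From `S * S = 1`,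
`a² = d² = 1`, `b² + xy = c² + xy = 1` and `x (b + c) = y (b + c) = 0`; the braid relation at the
diagonal entries `001, 010, 011` gives `a²b = ab² + bxy`, `b²c = bc²` and `d²b = db² + bxy`.
If `b = 0` then `c = 0` and `xy = 1`; otherwise `c = b`, so `x = y = 0`, and then `a = d = b = ±1`. -/

namespace ChargeConserving

variable {N : ℕ} {S : Matrix (Fin N × Fin N) (Fin N × Fin N) ℂ}

theorem apply_eq_zero (hS : ChargeConserving S) {k l i j : Fin N}
    (h₁ : (k, l) ≠ (i, j)) (h₂ : (k, l) ≠ (j, i)) : S (k, l) (i, j) = 0 := by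
  by_contra h
  exact (hS k l i j h).elim h₁ h₂

theorem mul_self_apply_diag (hS : ChargeConserving S) (k : Fin N) :
    (S * S) (k, k) (k, k) = S (k, k) (k, k) ^ 2 := by
  rw [mul_apply, Fintype.sum_eq_single (k, k), sq]
  rintro ⟨i, j⟩ h
  rw [hS.apply_eq_zero h.symm (by simpa [eq_comm, and_comm] using h), zero_mul]

theorem mul_self_apply_self (hS : ChargeConserving S) {k l : Fin N} (hkl : k ≠ l) :
    (S * S) (k, l) (k, l) = S (k, l) (k, l) ^ 2 + S (k, l) (l, k) * S (l, k) (k, l) := by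
  rw [mul_apply, Fintype.sum_eq_add (k, l) (l, k) (by simp [hkl]), sq]
  rintro ⟨i, j⟩ ⟨h₁, h₂⟩
  rw [hS.apply_eq_zero (Ne.symm h₁) (by simpa [eq_comm, and_comm] using h₂), zero_mul]

theorem mul_self_apply_swap (hS : ChargeConserving S) {k l : Fin N} (hkl : k ≠ l) :
    (S * S) (k, l) (l, k) = S (k, l) (l, k) * (S (k, l) (k, l) + S (l, k) (l, k)) := by
  rw [mul_apply, Fintype.sum_eq_add (k, l) (l, k) (by simp [hkl]), mul_add, mul_comm]
  rintro ⟨i, j⟩ ⟨h₁, h₂⟩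
  rw [hS.apply_eq_zero (Ne.symm h₁) (by simpa [eq_comm, and_comm] using h₂), zero_mul]

theorem eq_smul_one (hS : ChargeConserving S) {t : ℂ}
    (hswap : ∀ k l, k ≠ l → S (k, l) (l, k) = 0) (hdiag : ∀ k l, S (k, l) (k, l) = t) :
    S = t • 1 := by
  ext ⟨k, l⟩ ⟨i, j⟩
  rw [Matrix.smul_apply, one_apply, smul_ite, smul_eq_mul, mul_one, smul_zero]
  split_ifs with h₁
  · rw [← h₁, hdiag]
  by_cases h₂ : (k, l) = (j, i)
  · simp only [Prod.mk.injEq] at h₁ h₂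
    obtain ⟨rfl, rfl⟩ := h₂
    exact hswap _ _ fun h => h₁ ⟨h, h.symm⟩
  · exact hS.apply_eq_zero h₁ h₂

end ChargeConserving

theorem ChargeConserving.braid_diag_fin_two {S : Matrix (Fin 2 × Fin 2) (Fin 2 × Fin 2) ℂ}
    (hS : ChargeConserving S) (hbraid : Lone S * Ltwo S * Lone S = Ltwo S * Lone S * Ltwo S) :
    S (0, 0) (0, 0) ^ 2 * S (0, 1) (0, 1) =
        S (0, 0) (0, 0) * S (0, 1) (0, 1) ^ 2 + S (0, 1) (0, 1) * S (0, 1) (1, 0) * S (1, 0) (0, 1) ∧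
      S (0, 1) (0, 1) ^ 2 * S (1, 0) (1, 0) = S (0, 1) (0, 1) * S (1, 0) (1, 0) ^ 2 ∧
      S (1, 1) (1, 1) ^ 2 * S (0, 1) (0, 1) =
        S (1, 1) (1, 1) * S (0, 1) (0, 1) ^ 2 + S (0, 1) (0, 1) * S (0, 1) (1, 0) * S (1, 0) (0, 1) := by
  have entry := fun p => congrFun (congrFun hbraid p) p
  have h₁ := entry (0, 0, 1)
  have h₂ := entry (0, 1, 0)
  have h₃ := entry (0, 1, 1)
  simp only [Lone, Ltwo, mul_apply, of_apply, Fintype.sum_prod_type, Fin.sum_univ_two, mul_ite,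
    ite_mul, mul_one, one_mul, mul_zero, zero_mul, Finset.sum_ite_irrel, Finset.sum_ite_eq,
    Finset.sum_ite_eq', Finset.sum_const_zero, Finset.mem_univ, ↓reduceIte, ne_eq, Prod.mk.injEq,
    zero_ne_one, one_ne_zero, and_false, false_and, and_true, and_self, not_false_eq_true,
    hS.apply_eq_zero, add_zero, zero_add] at h₁ h₂ h₃
  exact ⟨by linear_combination h₁, by linear_combination h₂, by linear_combination -h₃⟩

theorem swap_or_scalar_of_relations {K : Type*} [Field K] [NeZero (2 : K)] {a b c d x y : K}
    (ha : a ^ 2 = 1) (hd : d ^ 2 = 1) (hb : b ^ 2 + x * y = 1) (hc : c ^ 2 + y * x = 1)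
    (hx : x * (b + c) = 0) (hy : y * (c + b) = 0)
    (hA : a ^ 2 * b = a * b ^ 2 + b * x * y) (hB : b ^ 2 * c = b * c ^ 2)
    (hD : d ^ 2 * b = d * b ^ 2 + b * x * y) :
    (b = 0 ∧ c = 0 ∧ x * y = 1) ∨ (x = 0 ∧ y = 0 ∧ a = b ∧ c = b ∧ d = b) := by
  have hsq : c ^ 2 = b ^ 2 := by linear_combination hc - hb
  rcases eq_or_ne b 0 with rfl | hb0
  · refine Or.inl ⟨rfl, ?_, by linear_combination hb⟩
    simpa using hsq
  have hc0 : c ≠ 0 := by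
    rintro rfl
    exact hb0 (by simpa using hsq.symm)
  have hcb : c = b := by
    have : b * c * (c - b) = 0 := by linear_combination -hB
    simpa [hb0, hc0, sub_eq_zero] using this
  rw [hcb] at hx hy
  have hx0 : x = 0 := by
    have : 2 * b * x = 0 := by linear_combination hx
    simpa [hb0, two_ne_zero] using this
  have hy0 : y = 0 := by
    have : 2 * b * y = 0 := by linear_combination hy
    simpa [hb0, two_ne_zero] using this
  have hb2 : b ^ 2 = 1 := by linear_combination hb - y * hx0
  refine Or.inr ⟨hx0, hy0, ?_, hcb, ?_⟩
  · linear_combination (-1) * hA + b * ha - a * hb2 - b * y * hx0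
  · linear_combination (-1) * hD + b * hd - d * hb2 - b * y * hx0

theorem stmt4 (S : Matrix (Fin 2 × Fin 2) (Fin 2 × Fin 2) ℂ)
    (hcc : ChargeConserving S)
    (hinv : S * S = 1)
    (hbraid : Lone S * Ltwo S * Lone S = Ltwo S * Lone S * Ltwo S) :
    S = 1 ∨ S = -1 ∨
      (S (e2, e1) (e2, e1) = 0 ∧
       S (e1, e2) (e1, e2) = 0 ∧
       S (e1, e1) (e1, e1) ^ 2 = 1 ∧
       S (e2, e2) (e2, e2) ^ 2 = 1 ∧
       S (e1, e2) (e2, e1) * S (e2, e1) (e1, e2) = 1) := by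
  have hdiag (k : Fin 2) : S (k, k) (k, k) ^ 2 = 1 := by
    rw [← hcc.mul_self_apply_diag, hinv, one_apply_eq]
  have hself {k l : Fin 2} (hkl : k ≠ l) :
      S (k, l) (k, l) ^ 2 + S (k, l) (l, k) * S (l, k) (k, l) = 1 := by
    rw [← hcc.mul_self_apply_self hkl, hinv, one_apply_eq]
  have hswap {k l : Fin 2} (hkl : k ≠ l) :
      S (k, l) (l, k) * (S (k, l) (k, l) + S (l, k) (l, k)) = 0 := by
    rw [← hcc.mul_self_apply_swap hkl, hinv, one_apply_ne (by simp [hkl])]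
  obtain ⟨hA, hB, hD⟩ := hcc.braid_diag_fin_two hbraid
  rcases swap_or_scalar_of_relations (hdiag 0) (hdiag 1) (hself zero_ne_one) (hself one_ne_zero)
    (hswap zero_ne_one) (hswap one_ne_zero) hA hB hD with ⟨hb, hc, hxy⟩ | ⟨hx, hy, ha, hc, hd⟩
  · exact Or.inr (Or.inr ⟨hc, hb, hdiag e1, hdiag e2, hxy⟩)
  have hS : S = S (0, 1) (0, 1) • 1 := hcc.eq_smul_one
    (Fin.forall_fin_two.2 ⟨Fin.forall_fin_two.2 ⟨absurd rfl, fun _ => hx⟩,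
      Fin.forall_fin_two.2 ⟨fun _ => hy, absurd rfl⟩⟩)
    (Fin.forall_fin_two.2 ⟨Fin.forall_fin_two.2 ⟨ha, rfl⟩, Fin.forall_fin_two.2 ⟨hc, hd⟩⟩)
  rcases sq_eq_one_iff.1 (ha ▸ hdiag 0) with h | h
  · exact Or.inl (by rw [hS, h, one_smul])
  · exact Or.inr (Or.inl (by rw [hS, h, neg_one_smul]))
end
end

section
/- Let A₁, A₂, b, c ∈ ℂ all be nonzero, and let R be the width-2 rank-2 matrix of type / with entries R (1,1) (1,1) = A₁, R (2,2) (2,2) = A₂, R (2,1) (1,2) = b, R (1,2) (2,1) = c, and all other entries 0. Let S be a charge-conserving matrix in Matrix (Fin 2 × Fin 2) (Fin 2 × Fin 2) ℂ. Then the pair (S,R) satisfies the loop braid relations if and only if S (2,1) (2,1) = 0, S (1,2) (1,2) = 0, S (1,1) (1,1) ^ 2 = 1, S (2,2) (2,2) ^ 2 = 1 and S (1,2) (2,1) * S (2,1) (1,2) = 1. -/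
open Matrix

noncomputable section

lemma mul121 {N : ℕ} (A B C : Matrix (Fin N × Fin N) (Fin N × Fin N) ℂ) :
    Lone A * Ltwo B * Lone C = Matrix.of fun p q =>
      ∑ m : Fin N, ∑ n₁ : Fin N, ∑ n₂ : Fin N,
        A (p.1, p.2.1) (m, n₂) * B (n₂, p.2.2) (n₁, q.2.2) * C (m, n₁) (q.1, q.2.1) := by
  ext ⟨x, y, z⟩ ⟨u, v, w⟩
  simp [Lone, Ltwo, Matrix.mul_apply, Fintype.sum_prod_type, mul_ite, ite_mul,
    Finset.sum_mul, Finset.mul_sum, Finset.sum_ite_eq, Finset.sum_ite_eq']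

lemma mul212 {N : ℕ} (A B C : Matrix (Fin N × Fin N) (Fin N × Fin N) ℂ) :
    Ltwo A * Lone B * Ltwo C = Matrix.of fun p q =>
      ∑ m : Fin N, ∑ n₁ : Fin N, ∑ n₂ : Fin N,
        A (p.2.1, p.2.2) (n₂, n₁) * B (p.1, n₂) (q.1, m) * C (m, n₁) (q.2.1, q.2.2) := by
  ext ⟨x, y, z⟩ ⟨u, v, w⟩
  simp [Lone, Ltwo, Matrix.mul_apply, Fintype.sum_prod_type, mul_ite, ite_mul,
    Finset.sum_mul, Finset.mul_sum, Finset.sum_ite_eq, Finset.sum_ite_eq']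

/-- entries of a generic charge-conserving two-colour matrix -/
def ent (a d p q s t : ℂ) : Fin 2 → Fin 2 → Fin 2 → Fin 2 → ℂ :=
  ![![![![a,0],![0,0]], ![![0,p],![s,0]]],
    ![![![0,t],![q,0]], ![![0,0],![0,d]]]]

/-- entries of the R-matrix -/
def rent (A₁ A₂ b c : ℂ) : Fin 2 → Fin 2 → Fin 2 → Fin 2 → ℂ :=
  ![![![![A₁,0],![0,0]], ![![0,0],![c,0]]],
    ![![![0,b],![0,0]], ![![0,0],![0,A₂]]]]

set_option maxHeartbeats 4000000 in
lemma relSSS (a d s t : ℂ) :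
    Lone (Matrix.of fun (P Q : Fin 2 × Fin 2) => ent a d 0 0 s t P.1 P.2 Q.1 Q.2)
      * Ltwo (Matrix.of fun (P Q : Fin 2 × Fin 2) => ent a d 0 0 s t P.1 P.2 Q.1 Q.2)
      * Lone (Matrix.of fun (P Q : Fin 2 × Fin 2) => ent a d 0 0 s t P.1 P.2 Q.1 Q.2)
    = Ltwo (Matrix.of fun (P Q : Fin 2 × Fin 2) => ent a d 0 0 s t P.1 P.2 Q.1 Q.2)
      * Lone (Matrix.of fun (P Q : Fin 2 × Fin 2) => ent a d 0 0 s t P.1 P.2 Q.1 Q.2)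
      * Ltwo (Matrix.of fun (P Q : Fin 2 × Fin 2) => ent a d 0 0 s t P.1 P.2 Q.1 Q.2) := by
  rw [mul121, mul212, ← Matrix.ext_iff]
  simp only [Prod.forall]
  simp [Fin.sum_univ_two, ent, Fin.forall_fin_two, mul_comm, mul_left_comm, mul_assoc]

set_option maxHeartbeats 4000000 in
lemma relRRR (A₁ A₂ b c : ℂ) :
    Lone (Matrix.of fun (P Q : Fin 2 × Fin 2) => rent A₁ A₂ b c P.1 P.2 Q.1 Q.2)
      * Ltwo (Matrix.of fun (P Q : Fin 2 × Fin 2) => rent A₁ A₂ b c P.1 P.2 Q.1 Q.2)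
      * Lone (Matrix.of fun (P Q : Fin 2 × Fin 2) => rent A₁ A₂ b c P.1 P.2 Q.1 Q.2)
    = Ltwo (Matrix.of fun (P Q : Fin 2 × Fin 2) => rent A₁ A₂ b c P.1 P.2 Q.1 Q.2)
      * Lone (Matrix.of fun (P Q : Fin 2 × Fin 2) => rent A₁ A₂ b c P.1 P.2 Q.1 Q.2)
      * Ltwo (Matrix.of fun (P Q : Fin 2 × Fin 2) => rent A₁ A₂ b c P.1 P.2 Q.1 Q.2) := by
  rw [mul121, mul212, ← Matrix.ext_iff]
  simp only [Prod.forall]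
  simp [Fin.sum_univ_two, rent, Fin.forall_fin_two, mul_comm, mul_left_comm, mul_assoc]

set_option maxHeartbeats 4000000 in
lemma relRRS (a d s t A₁ A₂ b c : ℂ) :
    Lone (Matrix.of fun (P Q : Fin 2 × Fin 2) => rent A₁ A₂ b c P.1 P.2 Q.1 Q.2)
      * Ltwo (Matrix.of fun (P Q : Fin 2 × Fin 2) => rent A₁ A₂ b c P.1 P.2 Q.1 Q.2)
      * Lone (Matrix.of fun (P Q : Fin 2 × Fin 2) => ent a d 0 0 s t P.1 P.2 Q.1 Q.2)
    = Ltwo (Matrix.of fun (P Q : Fin 2 × Fin 2) => ent a d 0 0 s t P.1 P.2 Q.1 Q.2)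
      * Lone (Matrix.of fun (P Q : Fin 2 × Fin 2) => rent A₁ A₂ b c P.1 P.2 Q.1 Q.2)
      * Ltwo (Matrix.of fun (P Q : Fin 2 × Fin 2) => rent A₁ A₂ b c P.1 P.2 Q.1 Q.2) := by
  rw [mul121, mul212, ← Matrix.ext_iff]
  simp only [Prod.forall]
  simp [Fin.sum_univ_two, ent, rent, Fin.forall_fin_two, mul_comm, mul_left_comm, mul_assoc]

set_option maxHeartbeats 4000000 in
lemma relRSS (a d s t A₁ A₂ b c : ℂ) :
    Lone (Matrix.of fun (P Q : Fin 2 × Fin 2) => rent A₁ A₂ b c P.1 P.2 Q.1 Q.2)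
      * Ltwo (Matrix.of fun (P Q : Fin 2 × Fin 2) => ent a d 0 0 s t P.1 P.2 Q.1 Q.2)
      * Lone (Matrix.of fun (P Q : Fin 2 × Fin 2) => ent a d 0 0 s t P.1 P.2 Q.1 Q.2)
    = Ltwo (Matrix.of fun (P Q : Fin 2 × Fin 2) => ent a d 0 0 s t P.1 P.2 Q.1 Q.2)
      * Lone (Matrix.of fun (P Q : Fin 2 × Fin 2) => ent a d 0 0 s t P.1 P.2 Q.1 Q.2)
      * Ltwo (Matrix.of fun (P Q : Fin 2 × Fin 2) => rent A₁ A₂ b c P.1 P.2 Q.1 Q.2) := by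
  rw [mul121, mul212, ← Matrix.ext_iff]
  simp only [Prod.forall]
  simp [Fin.sum_univ_two, ent, rent, Fin.forall_fin_two, mul_comm, mul_left_comm, mul_assoc]

set_option maxHeartbeats 1000000 in
lemma relSS1 (a d s t : ℂ) (ha' : a * a = 1) (hd' : d * d = 1) (hst : s * t = 1)
    (hts : t * s = 1) :
    (Matrix.of fun (P Q : Fin 2 × Fin 2) => ent a d 0 0 s t P.1 P.2 Q.1 Q.2)
      * (Matrix.of fun (P Q : Fin 2 × Fin 2) => ent a d 0 0 s t P.1 P.2 Q.1 Q.2) = 1 := by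
  rw [← Matrix.ext_iff]
  simp only [Prod.forall]
  simp [Matrix.mul_apply, Matrix.one_apply, Fintype.sum_prod_type, Fin.sum_univ_two, ent,
    Fin.forall_fin_two, ha', hd', hst, hts, Prod.ext_iff]

set_option maxHeartbeats 4000000 in
lemma key (a d p q s t A₁ A₂ b c : ℂ) (hA₁ : A₁ ≠ 0) (hb : b ≠ 0) :
    LoopBraid (Matrix.of fun (P Q : Fin 2 × Fin 2) => ent a d p q s t P.1 P.2 Q.1 Q.2)
        (Matrix.of fun (P Q : Fin 2 × Fin 2) => rent A₁ A₂ b c P.1 P.2 Q.1 Q.2) ↔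
      (q = 0 ∧ p = 0 ∧ a ^ 2 = 1 ∧ d ^ 2 = 1 ∧ s * t = 1) := by
  constructor
  · rintro ⟨h1, h2, h3, h4, h5⟩
    rw [mul121, mul212] at h5
    have E1 := congrFun (congrFun h1 ((0:Fin 2),(0:Fin 2))) ((0:Fin 2),(0:Fin 2))
    have E2 := congrFun (congrFun h1 ((1:Fin 2),(1:Fin 2))) ((1:Fin 2),(1:Fin 2))
    have E3 := congrFun (congrFun h1 ((0:Fin 2),(1:Fin 2))) ((0:Fin 2),(1:Fin 2))
    have E4 := congrFun (congrFun h1 ((0:Fin 2),(1:Fin 2))) ((1:Fin 2),(0:Fin 2))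
    have F1 := congrFun (congrFun h5 ((0:Fin 2),(1:Fin 2),(0:Fin 2))) ((0:Fin 2),(0:Fin 2),(1:Fin 2))
    have F2 := congrFun (congrFun h5 ((0:Fin 2),(0:Fin 2),(1:Fin 2))) ((0:Fin 2),(0:Fin 2),(1:Fin 2))
    have F3 := congrFun (congrFun h5 ((1:Fin 2),(0:Fin 2),(0:Fin 2))) ((1:Fin 2),(0:Fin 2),(0:Fin 2))
    simp [Matrix.mul_apply, Matrix.one_apply, Fintype.sum_prod_type, Fin.sum_univ_two, ent, rent]
      at E1 E2 E3 E4 F1 F2 F3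
    -- E1 : a * a = 1, E2 : d * d = 1, E3 : p * p + s * t = 1, E4 : p * s + s * q = 0
    -- F1 : (q = 0 ∨ p = 0) ∨ b = 0, F2 : A₁ * p * a = s * p * b, F3 : b * q * s = a * q * A₁
    have ha0 : a ≠ 0 := by intro h; rw [h] at E1; simp at E1
    have hpq : q = 0 ∨ p = 0 := F1.resolve_right hb
    have hp : p = 0 := by
      by_contra hp
      have hq : q = 0 := hpq.resolve_right hp
      have hs : s = 0 := by
        rw [hq] at E4
        simp at E4
        tauto
      rw [hs] at F2
      simp at F2
      tauto
    have hq : q = 0 := by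
      by_contra hq
      have hs : s = 0 := by
        rw [hp] at E4
        simp at E4
        tauto
      rw [hs] at F3
      simp at F3
      tauto
    refine ⟨hq, hp, by rw [sq]; exact E1, by rw [sq]; exact E2, ?_⟩
    rw [hp] at E3
    simpa using E3
  · rintro ⟨hq, hp, ha, hd, hst⟩
    subst hp hq
    have ha' : a * a = 1 := by linear_combination ha
    have hd' : d * d = 1 := by linear_combination hd
    have hts : t * s = 1 := by linear_combination hst
    exact ⟨relSS1 a d s t ha' hd' hst hts, relSSS a d s t, relRRR A₁ A₂ b c,
      relRRS a d s t A₁ A₂ b c, relRSS a d s t A₁ A₂ b c⟩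

set_option maxHeartbeats 1000000 in
theorem stmt5 (A₁ A₂ b c : ℂ) (hA₁ : A₁ ≠ 0) (hA₂ : A₂ ≠ 0) (hb : b ≠ 0) (hc : c ≠ 0)
    (R : Matrix (Fin 2 × Fin 2) (Fin 2 × Fin 2) ℂ)
    (hR : R = Matrix.of fun p q =>
      if p = (e1, e1) ∧ q = (e1, e1) then A₁
      else if p = (e2, e2) ∧ q = (e2, e2) then A₂
      else if p = (e2, e1) ∧ q = (e1, e2) then b
      else if p = (e1, e2) ∧ q = (e2, e1) then c
      else 0)
    (S : Matrix (Fin 2 × Fin 2) (Fin 2 × Fin 2) ℂ)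
    (hcc : ChargeConserving S) :
    LoopBraid S R ↔
      (S (e2, e1) (e2, e1) = 0 ∧
       S (e1, e2) (e1, e2) = 0 ∧
       S (e1, e1) (e1, e1) ^ 2 = 1 ∧
       S (e2, e2) (e2, e2) ^ 2 = 1 ∧
       S (e1, e2) (e2, e1) * S (e2, e1) (e1, e2) = 1) := by
  have hR' : R = Matrix.of fun (P Q : Fin 2 × Fin 2) => rent A₁ A₂ b c P.1 P.2 Q.1 Q.2 := by
    rw [hR]
    ext ⟨k, l⟩ ⟨i, j⟩
    fin_cases k <;> fin_cases l <;> fin_cases i <;> fin_cases j <;>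
      simp [rent, e1, e2, Prod.ext_iff]
  have hS : S = Matrix.of fun (P Q : Fin 2 × Fin 2) =>
      ent (S (e1, e1) (e1, e1)) (S (e2, e2) (e2, e2)) (S (e1, e2) (e1, e2))
        (S (e2, e1) (e2, e1)) (S (e1, e2) (e2, e1)) (S (e2, e1) (e1, e2)) P.1 P.2 Q.1 Q.2 := by
    ext ⟨k, l⟩ ⟨i, j⟩
    fin_cases k <;> fin_cases l <;> fin_cases i <;> fin_cases j <;>
      simp [ent, e1, e2, Prod.ext_iff] <;>
      (by_contra hne; rcases hcc _ _ _ _ hne with h | h <;>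
        simp_all [e1, e2, Prod.ext_iff])
  rw [show LoopBraid S R = LoopBraid
      (Matrix.of fun (P Q : Fin 2 × Fin 2) =>
        ent (S (e1, e1) (e1, e1)) (S (e2, e2) (e2, e2)) (S (e1, e2) (e1, e2))
          (S (e2, e1) (e2, e1)) (S (e1, e2) (e2, e1)) (S (e2, e1) (e1, e2)) P.1 P.2 Q.1 Q.2)
      (Matrix.of fun (P Q : Fin 2 × Fin 2) => rent A₁ A₂ b c P.1 P.2 Q.1 Q.2) from by
    rw [← hS, ← hR']]
  exact key _ _ _ _ _ _ _ _ _ _ hA₁ hb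
end
end

section
/- Let 𝓡 be a width-2 rank-2 matrix that is monomial of crossing type, i.e. 𝓡 (k,l) (i,j) ≠ 0 implies (k,l) = (j,i), and let R'' be any charge-conserving width-2 rank-2 matrix. Then 𝓡₁ * 𝓡₂ * R''₁ = R''₂ * 𝓡₁ * 𝓡₂ as matrices in Matrix (Fin 2 × Fin 2 × Fin 2) (Fin 2 × Fin 2 × Fin 2) ℂ. -/
open Matrix

noncomputable section

/-- A width-2 matrix is monomial of crossing type. -/
def CrossingType {N : ℕ} (M : Matrix (Fin N × Fin N) (Fin N × Fin N) ℂ) : Prop :=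
  ∀ k l i j : Fin N, M (k, l) (i, j) ≠ 0 → (k, l) = (j, i)

/-! For `𝓡` of crossing type, `𝓡₁ 𝓡₂` sends `e(a,b,c)` to `r(a,c) r(b,c) e(c,a,b)`, where
`r(i,c) = 𝓡 (c,i) (i,c)`: it is a cyclic permutation matrix `P` times a diagonal matrix `D`.
Conjugation by `P` turns `R''₁` into `R''₂`, and since `R''` only permutes the two letters it acts
on, while the weight of `(a,b,c)` is symmetric in `a` and `b`, `R''₁` commutes with `D`. Hence
`𝓡₁ 𝓡₂ R''₁ = P D R''₁ = P R''₁ D = R''₂ P D = R''₂ 𝓡₁ 𝓡₂`, for every rank `N`. -/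

variable {N : ℕ}

/-- `(a, b, c) ↦ (b, c, a)`. -/
def rotateTriple (N : ℕ) : Equiv.Perm (Fin N × Fin N × Fin N) :=
  (Equiv.prodComm _ _).trans (Equiv.prodAssoc _ _ _)

theorem CrossingType.apply_eq {M : Matrix (Fin N × Fin N) (Fin N × Fin N) ℂ} (hM : CrossingType M)
    (k l i j : Fin N) : M (k, l) (i, j) = if (k, l) = (j, i) then M (j, i) (i, j) else 0 := by
  split_ifs with h
  · rw [h]
  · exact not_not.mp (mt (hM k l i j) h)

theorem CrossingType.Lone_mul_Ltwo {M : Matrix (Fin N × Fin N) (Fin N × Fin N) ℂ}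
    (hM : CrossingType M) :
    Lone M * Ltwo M = (rotateTriple N).permMatrix ℂ *
      diagonal fun p => M (p.2.2, p.1) (p.1, p.2.2) * M (p.2.2, p.2.1) (p.2.1, p.2.2) := by
  ext ⟨a, b, c⟩ ⟨a', b', c'⟩
  rw [PEquiv.toMatrix_toPEquiv_mul]
  simp only [Lone, Ltwo, mul_apply, Fintype.sum_prod_type, of_apply, submatrix_apply,
    diagonal_apply, id, rotateTriple, Equiv.trans_apply, Equiv.prodComm_apply, Prod.swap_prod_mk,
    Equiv.prodAssoc_apply, Prod.mk.injEq, mul_ite, ite_mul, mul_one, one_mul, mul_zero, zero_mul,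
    Finset.sum_ite_irrel, Finset.sum_ite_eq, Finset.sum_ite_eq', Finset.mem_univ, if_true,
    Finset.sum_const_zero]
  rw [Finset.sum_eq_single a (fun x _ hx => by rw [hM.apply_eq]; simp [Ne.symm hx]) (by simp),
    hM.apply_eq a b a' a, hM.apply_eq a c b' c']
  split_ifs <;> simp_all

theorem rotateTriple_permMatrix_mul_Lone (M : Matrix (Fin N × Fin N) (Fin N × Fin N) ℂ) :
    (rotateTriple N).permMatrix ℂ * Lone M = Ltwo M * (rotateTriple N).permMatrix ℂ := by
  ext p q
  simp [PEquiv.toMatrix_toPEquiv_mul, PEquiv.mul_toMatrix_toPEquiv, rotateTriple, Lone, Ltwo]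

theorem ChargeConserving.commute_diagonal {M : Matrix (Fin N × Fin N) (Fin N × Fin N) ℂ}
    (hM : ChargeConserving M) (g : Fin N → ℂ) :
    Commute M (diagonal fun x => g x.1 * g x.2) := by
  ext ⟨k, l⟩ ⟨i, j⟩
  simp only [mul_diagonal, diagonal_mul]
  by_cases h : M (k, l) (i, j) = 0
  · simp [h]
  · rcases hM k l i j h with h' | h' <;> simp only [Prod.mk.injEq] at h' <;>
      obtain ⟨rfl, rfl⟩ := h' <;> ring

theorem ChargeConserving.commute_Lone_diagonal {M : Matrix (Fin N × Fin N) (Fin N × Fin N) ℂ}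
    (hM : ChargeConserving M) (g : Fin N → Fin N → ℂ) :
    Commute (Lone M) (diagonal fun p => g p.2.2 p.1 * g p.2.2 p.2.1) := by
  ext ⟨a, b, c⟩ ⟨a', b', c'⟩
  simp only [mul_diagonal, diagonal_mul, Lone, of_apply]
  by_cases hc : c = c'
  · subst hc
    have h := congrFun (congrFun (hM.commute_diagonal (g c)) (a, b)) (a', b')
    simp only [mul_diagonal, diagonal_mul] at h
    simp only [if_true]
    linear_combination h
  · simp [hc]

theorem stmt6 (𝓡 R'' : Matrix (Fin 2 × Fin 2) (Fin 2 × Fin 2) ℂ)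
    (h𝓡 : CrossingType 𝓡) (hR'' : ChargeConserving R'') :
    Lone 𝓡 * Ltwo 𝓡 * Lone R'' = Ltwo R'' * Lone 𝓡 * Ltwo 𝓡 := by
  set P := (rotateTriple 2).permMatrix ℂ
  set D := diagonal fun p : Fin 2 × Fin 2 × Fin 2 =>
    𝓡 (p.2.2, p.1) (p.1, p.2.2) * 𝓡 (p.2.2, p.2.1) (p.2.1, p.2.2)
  have hPD : Lone 𝓡 * Ltwo 𝓡 = P * D := h𝓡.Lone_mul_Ltwo
  have hD : Commute (Lone R'') D := hR''.commute_Lone_diagonal fun c i => 𝓡 (c, i) (i, c)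
  calc Lone 𝓡 * Ltwo 𝓡 * Lone R''
      = P * (D * Lone R'') := by rw [hPD, mul_assoc]
    _ = P * Lone R'' * D := by rw [← hD.eq, mul_assoc]
    _ = Ltwo R'' * (P * D) := by rw [rotateTriple_permMatrix_mul_Lone, mul_assoc]
    _ = Ltwo R'' * Lone 𝓡 * Ltwo 𝓡 := by rw [← hPD, mul_assoc]
end
end

section
/- Let N ≥ 1 and let R and S be width-2 rank-N matrices that are both monomial of crossing type, i.e. R (k,l) (i,j) ≠ 0 implies (k,l) = (j,i), and S (k,l) (i,j) ≠ 0 implies (k,l) = (j,i). Suppose S * S = 1. Then the pair (S,R) satisfies the loop braid relations. -/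
open Matrix

noncomputable section

set_option linter.unnecessarySeqFocus false

lemma entry {N : ℕ} {M : Matrix (Fin N × Fin N) (Fin N × Fin N) ℂ}
    (hM : CrossingType M) (k l i j : Fin N) :
    M (k, l) (i, j) = if k = j ∧ l = i then M (j, i) (i, j) else 0 := by
  split
  · rcases ‹_ ∧ _› with ⟨rfl, rfl⟩; rfl
  · by_contra h
    have := hM k l i j h
    simp_all [Prod.ext_iff]

lemma Lone_delta {N : ℕ} {M : Matrix (Fin N × Fin N) (Fin N × Fin N) ℂ}
    (hM : CrossingType M) (p q : Fin N × Fin N × Fin N) :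
    Lone M p q = if q = (p.2.1, p.1, p.2.2) then M (p.1, p.2.1) (p.2.1, p.1) else 0 := by
  obtain ⟨a,b,c⟩ := p; obtain ⟨a',b',c'⟩ := q
  show M (a,b) (a',b') * (if c = c' then 1 else 0) = _
  rw [entry hM]
  by_cases h1 : a = b' <;> by_cases h2 : b = a' <;> by_cases h3 : c = c' <;>
    simp_all [Prod.ext_iff] <;> grind

lemma Ltwo_delta {N : ℕ} {M : Matrix (Fin N × Fin N) (Fin N × Fin N) ℂ}
    (hM : CrossingType M) (p q : Fin N × Fin N × Fin N) :
    Ltwo M p q = if q = (p.1, p.2.2, p.2.1) then M (p.2.1, p.2.2) (p.2.2, p.2.1) else 0 := by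
  obtain ⟨a,b,c⟩ := p; obtain ⟨a',b',c'⟩ := q
  show (if a = a' then (1:ℂ) else 0) * M (b,c) (b',c') = _
  rw [entry hM]
  by_cases h1 : a = a' <;> by_cases h2 : b = c' <;> by_cases h3 : c = b' <;>
    simp_all [Prod.ext_iff] <;> grind

lemma Lone_mul {N : ℕ} {M : Matrix (Fin N × Fin N) (Fin N × Fin N) ℂ}
    (hM : CrossingType M) (B : Matrix (Fin N × Fin N × Fin N) (Fin N × Fin N × Fin N) ℂ)
    (p q : Fin N × Fin N × Fin N) :
    (Lone M * B) p q = M (p.1, p.2.1) (p.2.1, p.1) * B (p.2.1, p.1, p.2.2) q := by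
  simp [mul_apply, Lone_delta hM, ite_mul]

lemma Ltwo_mul {N : ℕ} {M : Matrix (Fin N × Fin N) (Fin N × Fin N) ℂ}
    (hM : CrossingType M) (B : Matrix (Fin N × Fin N × Fin N) (Fin N × Fin N × Fin N) ℂ)
    (p q : Fin N × Fin N × Fin N) :
    (Ltwo M * B) p q = M (p.2.1, p.2.2) (p.2.2, p.2.1) * B (p.1, p.2.2, p.2.1) q := by
  simp [mul_apply, Ltwo_delta hM, ite_mul]

lemma braid_mixed {N : ℕ}
    (A B C : Matrix (Fin N × Fin N) (Fin N × Fin N) ℂ)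
    (hA : CrossingType A) (hB : CrossingType B) (hC : CrossingType C) :
    Lone A * Ltwo B * Lone C = Ltwo C * Lone B * Ltwo A := by
  ext ⟨a,b,c⟩ ⟨a',b',c'⟩
  rw [mul_assoc, mul_assoc, Lone_mul hA, Ltwo_mul hB, Lone_delta hC,
    Ltwo_mul hC, Lone_mul hB, Ltwo_delta hA]
  by_cases h : ((a',b',c') : Fin N × Fin N × Fin N) = (c,b,a) <;> simp [h] <;> ring

theorem stmt7 (N : ℕ) (hN : 1 ≤ N)
    (R S : Matrix (Fin N × Fin N) (Fin N × Fin N) ℂ)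
    (hR : CrossingType R) (hS : CrossingType S)
    (hS2 : S * S = 1) :
    LoopBraid S R := by
  refine ⟨hS2, braid_mixed S S S hS hS hS, braid_mixed R R R hR hR hR, ?_, ?_⟩
  · ext ⟨a,b,c⟩ ⟨a',b',c'⟩
    rw [mul_assoc, mul_assoc, Lone_mul hR, Ltwo_mul hR, Lone_delta hS,
      Ltwo_mul hS, Lone_mul hR, Ltwo_delta hR]
    by_cases h : ((a',b',c') : Fin N × Fin N × Fin N) = (c,b,a) <;> simp [h] <;> ring
  · ext ⟨a,b,c⟩ ⟨a',b',c'⟩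
    rw [mul_assoc, mul_assoc, Lone_mul hR, Ltwo_mul hS, Lone_delta hS,
      Ltwo_mul hS, Lone_mul hS, Ltwo_delta hR]
    by_cases h : ((a',b',c') : Fin N × Fin N × Fin N) = (c,b,a) <;> simp [h] <;> ring
end
end

section
/- (X-symmetry Lemma.) Let N ≥ 1, let R and S be charge-conserving width-2 rank-N matrices such that the pair (S,R) satisfies the loop braid relations, and let g : Fin N × Fin N → ℂ be a function with g p ≠ 0 for every p, with X = Matrix.diagonal g and X' = Matrix.diagonal (fun p => (g p)⁻¹) (so X * X' = 1). Then the pair (X * S * X', X * R * X') also satisfies the loop braid relations. -/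
open Matrix

noncomputable section

/-!
Conjugation by `X = diagonal g` multiplies the entry `M (k,l) (i,j)` by `g (k,l) / g (i,j)`, and
for a charge-conserving `M` this entry vanishes unless `{k,l} = {i,j}`. So on width-3 words,
`(X M X')₁` and `(X M X')₂` are the conjugates of `M₁` and `M₂` by one and the same diagonal
matrix, with entries `pairProd g (a,b,c) = g (a,b) g (a,c) g (b,c)`: the two factors involving
the spectator letter are symmetric in the active pair, so they cancel. Each loop braid relation is
a word in `S₁, S₂, R₁, R₂` and is therefore just conjugated by `diagonal (pairProd g)`.
-/

theorem conj_mul_conj_of_mul_eq_one {α : Type*} [Monoid α] {E E' : α} (h : E' * E = 1)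
    (a b : α) : E * a * E' * (E * b * E') = E * (a * b) * E' := by
  calc E * a * E' * (E * b * E') = E * a * (E' * E) * b * E' := by simp only [mul_assoc]
    _ = E * (a * b) * E' := by rw [h, mul_one, mul_assoc E a b]

theorem Matrix.diagonal_inv_mul_diagonal {ι K : Type*} [Fintype ι] [DecidableEq ι]
    [DivisionRing K] {f : ι → K} (hf : ∀ i, f i ≠ 0) :
    diagonal (fun i => (f i)⁻¹) * diagonal f = 1 := by
  rw [diagonal_mul_diagonal, ← diagonal_one]
  exact congrArg diagonal (funext fun i => inv_mul_cancel₀ (hf i))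

theorem Matrix.diagonal_mul_diagonal_inv {ι K : Type*} [Fintype ι] [DecidableEq ι]
    [DivisionRing K] {f : ι → K} (hf : ∀ i, f i ≠ 0) :
    diagonal f * diagonal (fun i => (f i)⁻¹) = 1 := by
  rw [diagonal_mul_diagonal, ← diagonal_one]
  exact congrArg diagonal (funext fun i => mul_inv_cancel₀ (hf i))

variable {N : ℕ}

def pairProd (g : Fin N × Fin N → ℂ) (w : Fin N × Fin N × Fin N) : ℂ :=
  g (w.1, w.2.1) * g (w.1, w.2.2) * g (w.2.1, w.2.2)

theorem pairProd_ne_zero {g : Fin N × Fin N → ℂ} (hg : ∀ p, g p ≠ 0)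
    (w : Fin N × Fin N × Fin N) : pairProd g w ≠ 0 :=
  mul_ne_zero (mul_ne_zero (hg _) (hg _)) (hg _)

namespace ChargeConserving

variable {M : Matrix (Fin N × Fin N) (Fin N × Fin N) ℂ}

theorem apply_mul_eq_of_symm (hM : ChargeConserving M) (f : Fin N → Fin N → ℂ)
    (hf : ∀ x y, f x y = f y x) (k l i j : Fin N) :
    M (k, l) (i, j) * f k l = M (k, l) (i, j) * f i j := by
  by_cases h0 : M (k, l) (i, j) = 0
  · simp [h0]
  · rcases hM k l i j h0 with h | h <;> simp only [Prod.mk.injEq] at h <;>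
      obtain ⟨rfl, rfl⟩ := h
    · rfl
    · rw [hf]

theorem lone_conj_diagonal (hM : ChargeConserving M) {g : Fin N × Fin N → ℂ}
    (hg : ∀ p, g p ≠ 0) :
    Lone (diagonal g * M * diagonal (fun p => (g p)⁻¹)) =
      diagonal (pairProd g) * Lone M * diagonal (fun w => (pairProd g w)⁻¹) := by
  ext ⟨a, b, c⟩ ⟨a', b', c'⟩
  simp only [Lone, of_apply, diagonal_mul, mul_diagonal, pairProd]
  split_ifs with hc
  · subst hc
    have key := hM.apply_mul_eq_of_symm (fun x y => g (x, c) * g (y, c))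
      (fun x y => mul_comm _ _) a b a' b'
    have := hg (a', c); have := hg (b', c); have := hg (a', b')
    field_simp
    linear_combination -g (a, b) * key
  · simp

theorem ltwo_conj_diagonal (hM : ChargeConserving M) {g : Fin N × Fin N → ℂ}
    (hg : ∀ p, g p ≠ 0) :
    Ltwo (diagonal g * M * diagonal (fun p => (g p)⁻¹)) =
      diagonal (pairProd g) * Ltwo M * diagonal (fun w => (pairProd g w)⁻¹) := by
  ext ⟨a, b, c⟩ ⟨a', b', c'⟩
  simp only [Ltwo, of_apply, diagonal_mul, mul_diagonal, pairProd]
  split_ifs with ha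
  · subst ha
    have key := hM.apply_mul_eq_of_symm (fun x y => g (a, x) * g (a, y))
      (fun x y => mul_comm _ _) b c b' c'
    have := hg (a, b'); have := hg (a, c'); have := hg (b', c')
    field_simp
    linear_combination -g (b, c) * key
  · simp

end ChargeConserving

theorem stmt8_general (N : ℕ)
    (R S : Matrix (Fin N × Fin N) (Fin N × Fin N) ℂ)
    (hccR : ChargeConserving R) (hccS : ChargeConserving S)
    (hlb : LoopBraid S R)
    (g : Fin N × Fin N → ℂ) (hg : ∀ p, g p ≠ 0) :
    LoopBraid
      (Matrix.diagonal g * S * Matrix.diagonal (fun p => (g p)⁻¹))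
      (Matrix.diagonal g * R * Matrix.diagonal (fun p => (g p)⁻¹)) := by
  obtain ⟨hSS, hS, hR, hRRS, hRSS⟩ := hlb
  have hX := diagonal_inv_mul_diagonal hg
  have hP := diagonal_inv_mul_diagonal (pairProd_ne_zero hg)
  refine ⟨?_, ?_, ?_, ?_, ?_⟩
  · rw [conj_mul_conj_of_mul_eq_one hX, hSS, mul_one, diagonal_mul_diagonal_inv hg]
  all_goals
    simp only [hccS.lone_conj_diagonal hg, hccS.ltwo_conj_diagonal hg,
      hccR.lone_conj_diagonal hg, hccR.ltwo_conj_diagonal hg, conj_mul_conj_of_mul_eq_one hP,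
      hS, hR, hRRS, hRSS]

theorem stmt8 (N : ℕ) (hN : 1 ≤ N)
    (R S : Matrix (Fin N × Fin N) (Fin N × Fin N) ℂ)
    (hccR : ChargeConserving R) (hccS : ChargeConserving S)
    (hlb : LoopBraid S R)
    (g : Fin N × Fin N → ℂ) (hg : ∀ p, g p ≠ 0) :
    LoopBraid
      (Matrix.diagonal g * S * Matrix.diagonal (fun p => (g p)⁻¹))
      (Matrix.diagonal g * R * Matrix.diagonal (fun p => (g p)⁻¹)) :=
  stmt8_general N R S hccR hccS hlb g hg
end
end

section
/- (Texas braid relation invariance.) Let z, Z, ζ be charge-conserving width-2 rank-3 matrices satisfying the generalized braid relation z₁ * Z₂ * ζ₁ = ζ₂ * Z₁ * z₂ in Matrix (Fin 3 × Fin 3 × Fin 3) (Fin 3 × Fin 3 × Fin 3) ℂ. Let g : Fin 3 × Fin 3 → ℂ be a function with g p ≠ 0 for every p, let X = Matrix.diagonal g and X' = Matrix.diagonal (fun p => (g p)⁻¹), and set z' = X * z * X', Z' = X * Z * X', ζ' = X * ζ * X'. Then z'₁ * Z'₂ * ζ'₁ = ζ'₂ * Z'₁ * z'₂. -/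
open Matrix

noncomputable section

/-- The diagonal scaling function on triples. -/
def hfun {N : ℕ} (g : Fin N × Fin N → ℂ) (p : Fin N × Fin N × Fin N) : ℂ :=
  g (p.1, p.2.1) * g (p.1, p.2.2) * g (p.2.1, p.2.2)

lemma hfun_ne {N : ℕ} (g : Fin N × Fin N → ℂ) (hg : ∀ p, g p ≠ 0) (p) :
    hfun g p ≠ 0 := by
  simp [hfun, hg]

lemma key_s9 (x u v : ℂ) (hu : u ≠ 0) (hv : v ≠ 0) :
    x = x * u * v * u⁻¹ * v⁻¹ := by
  field_simp

set_option maxHeartbeats 1000000 in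
lemma lone_conj {N : ℕ} (g : Fin N × Fin N → ℂ) (hg : ∀ p, g p ≠ 0)
    (M : Matrix (Fin N × Fin N) (Fin N × Fin N) ℂ) (hM : ChargeConserving M) :
    Lone (Matrix.diagonal g * M * Matrix.diagonal (fun p => (g p)⁻¹)) =
      Matrix.diagonal (hfun g) * Lone M *
        Matrix.diagonal (fun p => (hfun g p)⁻¹) := by
  ext ⟨a, b, c⟩ ⟨a', b', c'⟩
  simp only [Lone, Matrix.mul_diagonal, Matrix.diagonal_mul, Matrix.of_apply]
  by_cases hm : M (a, b) (a', b') = 0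
  · simp [hm]
  · by_cases hc : c = c'
    · subst hc
      rcases hM a b a' b' hm with h1 | h1 <;>
      · simp only [Prod.mk.injEq] at h1
        obtain ⟨rfl, rfl⟩ := h1
        simp only [hfun, if_pos rfl]
        field_simp
        rw [div_eq_div_iff (hg _) (mul_ne_zero (mul_ne_zero (hg _) (hg _)) (hg _))]
        ring
    · simp [hc]

set_option maxHeartbeats 1000000 in
lemma ltwo_conj {N : ℕ} (g : Fin N × Fin N → ℂ) (hg : ∀ p, g p ≠ 0)
    (M : Matrix (Fin N × Fin N) (Fin N × Fin N) ℂ) (hM : ChargeConserving M) :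
    Ltwo (Matrix.diagonal g * M * Matrix.diagonal (fun p => (g p)⁻¹)) =
      Matrix.diagonal (hfun g) * Ltwo M *
        Matrix.diagonal (fun p => (hfun g p)⁻¹) := by
  ext ⟨a, b, c⟩ ⟨a', b', c'⟩
  simp only [Ltwo, Matrix.mul_diagonal, Matrix.diagonal_mul, Matrix.of_apply]
  by_cases hm : M (b, c) (b', c') = 0
  · simp [hm]
  · by_cases ha : a = a'
    · subst ha
      rcases hM b c b' c' hm with h1 | h1 <;>
      · simp only [Prod.mk.injEq] at h1
        obtain ⟨rfl, rfl⟩ := h1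
        simp only [hfun, if_pos rfl]
        field_simp
        rw [div_eq_div_iff (hg _) (mul_ne_zero (mul_ne_zero (hg _) (hg _)) (hg _))]
        ring
    · simp [ha]

theorem stmt9 (z Z ζ : Matrix (Fin 3 × Fin 3) (Fin 3 × Fin 3) ℂ)
    (hz : ChargeConserving z) (hZ : ChargeConserving Z) (hζ : ChargeConserving ζ)
    (h : Lone z * Ltwo Z * Lone ζ = Ltwo ζ * Lone Z * Ltwo z)
    (g : Fin 3 × Fin 3 → ℂ) (hg : ∀ p, g p ≠ 0)
    (z' Z' ζ' : Matrix (Fin 3 × Fin 3) (Fin 3 × Fin 3) ℂ)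
    (hz' : z' = Matrix.diagonal g * z * Matrix.diagonal (fun p => (g p)⁻¹))
    (hZ' : Z' = Matrix.diagonal g * Z * Matrix.diagonal (fun p => (g p)⁻¹))
    (hζ' : ζ' = Matrix.diagonal g * ζ * Matrix.diagonal (fun p => (g p)⁻¹)) :
    Lone z' * Ltwo Z' * Lone ζ' = Ltwo ζ' * Lone Z' * Ltwo z' := by
  subst hz' hZ' hζ'
  rw [lone_conj g hg z hz, lone_conj g hg ζ hζ, lone_conj g hg Z hZ,
    ltwo_conj g hg Z hZ, ltwo_conj g hg ζ hζ, ltwo_conj g hg z hz]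
  have hD : Matrix.diagonal (fun p => (hfun g p)⁻¹) * Matrix.diagonal (hfun g) = 1 := by
    rw [Matrix.diagonal_mul_diagonal]
    convert Matrix.diagonal_one
    exact inv_mul_cancel₀ (hfun_ne g hg _)
  calc Matrix.diagonal (hfun g) * Lone z * Matrix.diagonal (fun p => (hfun g p)⁻¹) *
        (Matrix.diagonal (hfun g) * Ltwo Z * Matrix.diagonal (fun p => (hfun g p)⁻¹)) *
        (Matrix.diagonal (hfun g) * Lone ζ * Matrix.diagonal (fun p => (hfun g p)⁻¹))
      = Matrix.diagonal (hfun g) * (Lone z * Ltwo Z * Lone ζ) *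
        Matrix.diagonal (fun p => (hfun g p)⁻¹) := by
        simp only [Matrix.mul_assoc]
        rw [← Matrix.mul_assoc (Matrix.diagonal fun p => (hfun g p)⁻¹) (Matrix.diagonal (hfun g)),
          hD, Matrix.one_mul,
          ← Matrix.mul_assoc (Matrix.diagonal fun p => (hfun g p)⁻¹) (Matrix.diagonal (hfun g)),
          hD, Matrix.one_mul]
    _ = Matrix.diagonal (hfun g) * (Ltwo ζ * Lone Z * Ltwo z) *
        Matrix.diagonal (fun p => (hfun g p)⁻¹) := by rw [h]
    _ = Matrix.diagonal (hfun g) * Ltwo ζ * Matrix.diagonal (fun p => (hfun g p)⁻¹) *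
        (Matrix.diagonal (hfun g) * Lone Z * Matrix.diagonal (fun p => (hfun g p)⁻¹)) *
        (Matrix.diagonal (hfun g) * Ltwo z * Matrix.diagonal (fun p => (hfun g p)⁻¹)) := by
        simp only [Matrix.mul_assoc]
        rw [← Matrix.mul_assoc (Matrix.diagonal fun p => (hfun g p)⁻¹) (Matrix.diagonal (hfun g)),
          hD, Matrix.one_mul,
          ← Matrix.mul_assoc (Matrix.diagonal fun p => (hfun g p)⁻¹) (Matrix.diagonal (hfun g)),
          hD, Matrix.one_mul]
end
end

section
/- (Restriction Lemma.) Let N ≥ 3 and let R and S be charge-conserving width-2 rank-N matrices. For an injective map ψ : Fin 3 → Fin N and a width-2 rank-N matrix M, define the restricted width-2 rank-3 matrix f^ψ M by (f^ψ M) (i,j) (k,l) = M (ψ i, ψ j) (ψ k, ψ l). Then the pair (S,R) satisfies the loop braid relations (at rank N) if and only if for every injective ψ : Fin 3 → Fin N the pair (f^ψ S, f^ψ R) satisfies the loop braid relations (at rank 3). -/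
open Matrix

noncomputable section

/-- Restriction of a width-2 rank-N matrix along an injective map `ψ : Fin 3 → Fin N`. -/
def restrict3 {N : ℕ} (ψ : Fin 3 → Fin N)
    (M : Matrix (Fin N × Fin N) (Fin N × Fin N) ℂ) :
    Matrix (Fin 3 × Fin 3) (Fin 3 × Fin 3) ℂ :=
  Matrix.of fun p q => M (ψ p.1, ψ p.2) (ψ q.1, ψ q.2)


/-!
Charge conservation implies that `M p q ≠ 0` only when the letters of `q` are among those of
`p`. This property passes to `M₁`, `M₂` and to products, and for such matrices the sum defining
a product never leaves the words spelled with a fixed set of letters, so restricting to the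
letters in the range of an injective `ψ` is multiplicative. An entry `(p, q)` of such a width-3
matrix is either zero or sees at most the three letters of `p`; so when `N ≥ 3` an identity
between such matrices holds iff it holds after every restriction.
-/

open Function Set

namespace Matrix

variable {V W R : Type*}

/-- The span of the basis vectors outside `s` is invariant under `M`. -/
def RowClosedOn [Zero R] (M : Matrix W W R) (s : Set W) : Prop :=
  ∀ ⦃p q⦄, p ∈ s → M p q ≠ 0 → q ∈ s

theorem RowClosedOn.one [Zero R] [One R] [DecidableEq W] (s : Set W) :
    RowClosedOn (1 : Matrix W W R) s := by
  intro p q hp hpq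
  rwa [← of_not_not (mt one_apply_ne hpq)]

theorem RowClosedOn.mul [Fintype W] [NonUnitalNonAssocSemiring R] {A B : Matrix W W R}
    {s : Set W} (hA : RowClosedOn A s) (hB : RowClosedOn B s) : RowClosedOn (A * B) s := by
  intro p q hp hpq
  obtain ⟨r, -, hr⟩ := Finset.exists_ne_zero_of_sum_ne_zero hpq
  exact hB (hA hp (left_ne_zero_of_mul hr)) (right_ne_zero_of_mul hr)

theorem submatrix_mul_of_rowClosedOn [Fintype V] [Fintype W] [NonUnitalNonAssocSemiring R]
    {A : Matrix W W R} (B : Matrix W W R) {e : V → W} (he : Injective e)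
    (hA : RowClosedOn A (range e)) :
    (A * B).submatrix e e = A.submatrix e e * B.submatrix e e := by
  ext v w
  refine (Fintype.sum_of_injective e he _ _ (fun r hr => ?_) fun _ => rfl).symm
  by_contra hne
  exact hr (hA (mem_range_self v) (left_ne_zero_of_mul hne))

theorem eq_of_forall_submatrix_eq {ι : Type*} [Zero R] {A B : Matrix W W R} (e : ι → V → W)
    (hcover : ∀ p, ∃ i, p ∈ range (e i)) (hA : ∀ i, RowClosedOn A (range (e i)))
    (hB : ∀ i, RowClosedOn B (range (e i)))
    (h : ∀ i, A.submatrix (e i) (e i) = B.submatrix (e i) (e i)) : A = B := by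
  ext p q
  obtain ⟨i, v, rfl⟩ := hcover p
  by_cases hq : q ∈ range (e i)
  · obtain ⟨w, rfl⟩ := hq
    exact congr_fun₂ (h i) v w
  · rw [of_not_not (mt (hA i (mem_range_self v)) hq),
      of_not_not (mt (hB i (mem_range_self v)) hq)]

end Matrix

open Matrix

theorem exists_injective_fin_subset_range {α : Type*} [Fintype α] [LinearOrder α] {n : ℕ}
    (hn : n ≤ Fintype.card α) {s : Finset α} (hs : s.card ≤ n) :
    ∃ ψ : Fin n → α, Injective ψ ∧ (s : Set α) ⊆ range ψ := by
  obtain ⟨t, hst, ht⟩ := Finset.exists_superset_card_eq hs hn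
  refine ⟨t.orderEmbOfFin ht, (t.orderEmbOfFin ht).injective, ?_⟩
  rw [Finset.range_orderEmbOfFin]
  exact_mod_cast hst

section Letters

variable {α R : Type*}

/-- `M p q ≠ 0` only if the letters of `q` are among those of `p`. -/
def LetterClosed₂ [Zero R] (M : Matrix (α × α) (α × α) R) : Prop :=
  ∀ s : Set α, RowClosedOn M (s ×ˢ s)

def LetterClosed₃ [Zero R] (T : Matrix (α × α × α) (α × α × α) R) : Prop :=
  ∀ s : Set α, RowClosedOn T (s ×ˢ s ×ˢ s)

theorem LetterClosed₂.mul [Fintype α] [NonUnitalNonAssocSemiring R]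
    {A B : Matrix (α × α) (α × α) R}
    (hA : LetterClosed₂ A) (hB : LetterClosed₂ B) : LetterClosed₂ (A * B) :=
  fun s => (hA s).mul (hB s)

theorem LetterClosed₃.mul [Fintype α] [NonUnitalNonAssocSemiring R]
    {A B : Matrix (α × α × α) (α × α × α) R}
    (hA : LetterClosed₃ A) (hB : LetterClosed₃ B) : LetterClosed₃ (A * B) :=
  fun s => (hA s).mul (hB s)

end Letters

variable {N : ℕ}

theorem ChargeConserving.letterClosed₂ {M : Matrix (Fin N × Fin N) (Fin N × Fin N) ℂ}
    (hM : ChargeConserving M) : LetterClosed₂ M := by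
  rintro s ⟨k, l⟩ ⟨i, j⟩ ⟨hk, hl⟩ hne
  rcases hM k l i j hne with h | h <;> simp only [Prod.mk.injEq] at h <;>
    obtain ⟨rfl, rfl⟩ := h
  exacts [⟨hk, hl⟩, ⟨hl, hk⟩]

theorem LetterClosed₂.lone {M : Matrix (Fin N × Fin N) (Fin N × Fin N) ℂ}
    (hM : LetterClosed₂ M) : LetterClosed₃ (Lone M) := by
  rintro s ⟨a, b, c⟩ ⟨a', b', c'⟩ ⟨ha, hb, hc⟩ hne
  simp only [Lone, of_apply, ne_eq, mul_eq_zero, ite_eq_right_iff, not_or, not_forall] at hne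
  obtain ⟨hM', rfl, -⟩ := hne
  exact ⟨(hM s ⟨ha, hb⟩ hM').1, (hM s ⟨ha, hb⟩ hM').2, hc⟩

theorem LetterClosed₂.ltwo {M : Matrix (Fin N × Fin N) (Fin N × Fin N) ℂ}
    (hM : LetterClosed₂ M) : LetterClosed₃ (Ltwo M) := by
  rintro s ⟨a, b, c⟩ ⟨a', b', c'⟩ ⟨ha, hb, hc⟩ hne
  simp only [Ltwo, of_apply, ne_eq, mul_eq_zero, ite_eq_right_iff, not_or, not_forall] at hne
  obtain ⟨⟨rfl, -⟩, hM'⟩ := hne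
  exact ⟨ha, (hM s ⟨hb, hc⟩ hM').1, (hM s ⟨hb, hc⟩ hM').2⟩

def restrictWidth3 (ψ : Fin 3 → Fin N)
    (T : Matrix (Fin N × Fin N × Fin N) (Fin N × Fin N × Fin N) ℂ) :
    Matrix (Fin 3 × Fin 3 × Fin 3) (Fin 3 × Fin 3 × Fin 3) ℂ :=
  T.submatrix (Prod.map ψ (Prod.map ψ ψ)) (Prod.map ψ (Prod.map ψ ψ))

section Restriction

variable {ψ : Fin 3 → Fin N}

theorem restrict3_one (hψ : Injective ψ) : restrict3 ψ 1 = 1 :=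
  submatrix_one _ (hψ.prodMap hψ)

theorem LetterClosed₂.restrict3_mul {A : Matrix (Fin N × Fin N) (Fin N × Fin N) ℂ}
    (hA : LetterClosed₂ A) (hψ : Injective ψ)
    (B : Matrix (Fin N × Fin N) (Fin N × Fin N) ℂ) :
    restrict3 ψ (A * B) = restrict3 ψ A * restrict3 ψ B :=
  submatrix_mul_of_rowClosedOn (e := Prod.map ψ ψ) B (hψ.prodMap hψ)
    (by rw [range_prodMap]; exact hA _)

theorem LetterClosed₃.restrictWidth3_mul
    {A : Matrix (Fin N × Fin N × Fin N) (Fin N × Fin N × Fin N) ℂ} (hA : LetterClosed₃ A)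
    (hψ : Injective ψ) (B : Matrix (Fin N × Fin N × Fin N) (Fin N × Fin N × Fin N) ℂ) :
    restrictWidth3 ψ (A * B) = restrictWidth3 ψ A * restrictWidth3 ψ B :=
  submatrix_mul_of_rowClosedOn B (hψ.prodMap (hψ.prodMap hψ))
    (by rw [range_prodMap, range_prodMap]; exact hA _)

theorem lone_restrict3 (hψ : Injective ψ) (M : Matrix (Fin N × Fin N) (Fin N × Fin N) ℂ) :
    Lone (restrict3 ψ M) = restrictWidth3 ψ (Lone M) := by
  ext p q
  simp only [Lone, restrict3, restrictWidth3, of_apply, submatrix_apply, Prod.map, hψ.eq_iff]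

theorem ltwo_restrict3 (hψ : Injective ψ) (M : Matrix (Fin N × Fin N) (Fin N × Fin N) ℂ) :
    Ltwo (restrict3 ψ M) = restrictWidth3 ψ (Ltwo M) := by
  ext p q
  simp only [Ltwo, restrict3, restrictWidth3, of_apply, submatrix_apply, Prod.map, hψ.eq_iff]

theorem loopBraid_restrict3_iff (hψ : Injective ψ)
    {S R : Matrix (Fin N × Fin N) (Fin N × Fin N) ℂ}
    (hS : LetterClosed₂ S) (hR : LetterClosed₂ R) :
    LoopBraid (restrict3 ψ S) (restrict3 ψ R) ↔
      restrict3 ψ (S * S) = restrict3 ψ 1 ∧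
      restrictWidth3 ψ (Lone S * Ltwo S * Lone S) = restrictWidth3 ψ (Ltwo S * Lone S * Ltwo S) ∧
      restrictWidth3 ψ (Lone R * Ltwo R * Lone R) = restrictWidth3 ψ (Ltwo R * Lone R * Ltwo R) ∧
      restrictWidth3 ψ (Lone R * Ltwo R * Lone S) = restrictWidth3 ψ (Ltwo S * Lone R * Ltwo R) ∧
      restrictWidth3 ψ (Lone R * Ltwo S * Lone S) = restrictWidth3 ψ (Ltwo S * Lone S * Ltwo R) := by
  simp (disch := apply_rules [LetterClosed₃.mul, LetterClosed₂.lone, LetterClosed₂.ltwo]) only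
    [LoopBraid, hS.restrict3_mul hψ, restrict3_one hψ,
      fun _ hA => LetterClosed₃.restrictWidth3_mul hA hψ, lone_restrict3 hψ, ltwo_restrict3 hψ]

end Restriction

theorem eq_iff_forall_restrict3_eq (hN : 3 ≤ N) {A B : Matrix (Fin N × Fin N) (Fin N × Fin N) ℂ}
    (hA : LetterClosed₂ A) (hB : LetterClosed₂ B) :
    A = B ↔ ∀ ψ : Fin 3 → Fin N, Injective ψ → restrict3 ψ A = restrict3 ψ B := by
  refine ⟨by rintro rfl; simp, fun h => ?_⟩
  refine eq_of_forall_submatrix_eq (fun ψ : {ψ : Fin 3 → Fin N // Injective ψ} =>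
    Prod.map ψ.1 ψ.1) (fun p => ?_) (fun ψ => ?_) (fun ψ => ?_) (fun ψ => h ψ.1 ψ.2)
  · obtain ⟨ψ, hψ, hp⟩ := exists_injective_fin_subset_range (by simpa using hN)
      (Finset.card_le_two (a := p.1) (b := p.2) |>.trans (by norm_num))
    refine ⟨⟨ψ, hψ⟩, ?_⟩
    rw [range_prodMap]
    exact ⟨hp (by simp), hp (by simp)⟩
  · rw [range_prodMap]; exact hA _
  · rw [range_prodMap]; exact hB _

theorem eq_iff_forall_restrictWidth3_eq (hN : 3 ≤ N)
    {A B : Matrix (Fin N × Fin N × Fin N) (Fin N × Fin N × Fin N) ℂ}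
    (hA : LetterClosed₃ A) (hB : LetterClosed₃ B) :
    A = B ↔ ∀ ψ : Fin 3 → Fin N, Injective ψ → restrictWidth3 ψ A = restrictWidth3 ψ B := by
  refine ⟨by rintro rfl; simp, fun h => ?_⟩
  refine eq_of_forall_submatrix_eq (fun ψ : {ψ : Fin 3 → Fin N // Injective ψ} =>
    Prod.map ψ.1 (Prod.map ψ.1 ψ.1)) (fun p => ?_) (fun ψ => ?_) (fun ψ => ?_)
    (fun ψ => h ψ.1 ψ.2)
  · obtain ⟨ψ, hψ, hp⟩ := exists_injective_fin_subset_range (by simpa using hN)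
      (Finset.card_le_three (a := p.1) (b := p.2.1) (c := p.2.2))
    refine ⟨⟨ψ, hψ⟩, ?_⟩
    rw [range_prodMap, range_prodMap]
    exact ⟨hp (by simp), hp (by simp), hp (by simp)⟩
  · rw [range_prodMap, range_prodMap]; exact hA _
  · rw [range_prodMap, range_prodMap]; exact hB _

theorem stmt10 (N : ℕ) (hN : 3 ≤ N)
    (R S : Matrix (Fin N × Fin N) (Fin N × Fin N) ℂ)
    (hccR : ChargeConserving R) (hccS : ChargeConserving S) :
    LoopBraid S R ↔
      ∀ ψ : Fin 3 → Fin N, Function.Injective ψ →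
        LoopBraid (restrict3 ψ S) (restrict3 ψ R) := by
  have hS := hccS.letterClosed₂
  have hR := hccR.letterClosed₂
  rw [forall₂_congr fun ψ hψ => loopBraid_restrict3_iff hψ hS hR]
  simp only [imp_and, forall_and, LoopBraid]
  refine and_congr (eq_iff_forall_restrict3_eq hN (hS.mul hS) fun _ => .one _) ?_
  refine and_congr ?_ (and_congr ?_ (and_congr ?_ ?_)) <;>
    apply eq_iff_forall_restrictWidth3_eq hN <;>
    apply_rules [LetterClosed₃.mul, LetterClosed₂.lone, LetterClosed₂.ltwo]
end
end

section
/- (Functoriality of restriction on charge-conserving matrices.) Let w, M, N ≥ 1, let ψ : Fin M → Fin N be injective, and let A, B : Matrix (Fin w → Fin N) (Fin w → Fin N) ℂ be width-w charge-conserving matrices, i.e. A v u ≠ 0 implies there is a permutation σ : Equiv.Perm (Fin w) with v = u ∘ σ, and similarly for B. Define f^ψ A : Matrix (Fin w → Fin M) (Fin w → Fin M) ℂ by (f^ψ A) v u = A (ψ ∘ v) (ψ ∘ u). Then f^ψ (A * B) = (f^ψ A) * (f^ψ B). -/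
open Matrix

noncomputable section

/-- A width-w rank-N matrix is charge-conserving: a nonzero entry forces the row
word to be a place-permutation of the column word. -/
def ChargeConservingW (w N : ℕ)
    (A : Matrix (Fin w → Fin N) (Fin w → Fin N) ℂ) : Prop :=
  ∀ v u : Fin w → Fin N, A v u ≠ 0 → ∃ σ : Equiv.Perm (Fin w), v = u ∘ σ

/-- Restriction of a width-w rank-N matrix along `ψ : Fin M → Fin N`. -/
def restrictW (w M N : ℕ) (ψ : Fin M → Fin N)
    (A : Matrix (Fin w → Fin N) (Fin w → Fin N) ℂ) :
    Matrix (Fin w → Fin M) (Fin w → Fin M) ℂ :=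
  Matrix.of fun v u => A (ψ ∘ v) (ψ ∘ u)

/-! A charge-conserving `B` only reaches words that are permutations of the input, so when
the input is a word in the image of `ψ`, every intermediate index of `(A * B) (ψ ∘ v) (ψ ∘ u)`
with a nonzero contribution is again of the form `ψ ∘ x`, and the sum collapses onto such
words. -/

theorem Matrix.submatrix_mul_of_ne_zero_mem_range {l m n l' m' n' R : Type*}
    [Fintype m] [Fintype m'] [NonUnitalNonAssocSemiring R]
    (A : Matrix l m R) (B : Matrix m n R) (r : l' → l) (e : m' → m) (c : n' → n)
    (he : Function.Injective e) (hB : ∀ j k, B j (c k) ≠ 0 → j ∈ Set.range e) :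
    (A * B).submatrix r c = A.submatrix r e * B.submatrix e c := by
  ext i k
  refine (Fintype.sum_of_injective e he _ _ (fun j hj => ?_) fun _ => rfl).symm
  exact mul_eq_zero_of_right _ (not_not.mp (mt (hB j k) hj))

theorem restrictW_eq_submatrix (w M N : ℕ) (ψ : Fin M → Fin N)
    (A : Matrix (Fin w → Fin N) (Fin w → Fin N) ℂ) :
    restrictW w M N ψ A = A.submatrix (ψ ∘ ·) (ψ ∘ ·) :=
  rfl

theorem ChargeConservingW.mem_range_comp {w M N : ℕ}
    {B : Matrix (Fin w → Fin N) (Fin w → Fin N) ℂ}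
    (hB : ChargeConservingW w N B) (ψ : Fin M → Fin N) {x : Fin w → Fin N} {u : Fin w → Fin M}
    (hx : B x (ψ ∘ u) ≠ 0) : x ∈ Set.range (ψ ∘ · : (Fin w → Fin M) → Fin w → Fin N) := by
  obtain ⟨σ, rfl⟩ := hB x (ψ ∘ u) hx
  exact ⟨u ∘ σ, rfl⟩

theorem stmt11_general (w M N : ℕ)
    (ψ : Fin M → Fin N) (hψ : Function.Injective ψ)
    (A B : Matrix (Fin w → Fin N) (Fin w → Fin N) ℂ)
    (hB : ChargeConservingW w N B) :
    restrictW w M N ψ (A * B) = restrictW w M N ψ A * restrictW w M N ψ B := by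
  simp only [restrictW_eq_submatrix]
  exact Matrix.submatrix_mul_of_ne_zero_mem_range A B _ _ _ hψ.comp_left
    fun _ _ hx => hB.mem_range_comp ψ hx

theorem stmt11 (w M N : ℕ) (hw : 1 ≤ w) (hM : 1 ≤ M) (hN : 1 ≤ N)
    (ψ : Fin M → Fin N) (hψ : Function.Injective ψ)
    (A B : Matrix (Fin w → Fin N) (Fin w → Fin N) ℂ)
    (hA : ChargeConservingW w N A) (hB : ChargeConservingW w N B) :
    restrictW w M N ψ (A * B) = restrictW w M N ψ A * restrictW w M N ψ B :=
  stmt11_general w M N ψ hψ A B hB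
end
end

section
/- Let n : ℕ and i : ℕ with i + 2 < n. Let 𝔯_i be the endomorphism of FreeGroup (Fin n) determined on generators by x_i ↦ x_{i+1} * x_i * x_{i+1}⁻¹, x_{i+1} ↦ x_i, and x_k ↦ x_k for k ∉ {i, i+1}; let 𝔰_i be the endomorphism determined by x_i ↦ x_{i+1}, x_{i+1} ↦ x_i, x_k ↦ x_k otherwise; define 𝔯_{i+1} and 𝔰_{i+1} analogously with i replaced by i+1. Then 𝔯_i ∘ 𝔯_{i+1} ∘ 𝔰_i = 𝔰_{i+1} ∘ 𝔯_i ∘ 𝔯_{i+1} as monoid homomorphisms FreeGroup (Fin n) → FreeGroup (Fin n). -/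
noncomputable section

/-- The endomorphism 𝔯_i of the free group on `n` generators:
`x_i ↦ x_{i+1} x_i x_{i+1}⁻¹`, `x_{i+1} ↦ x_i`, other generators fixed. -/
def rmap (n i : ℕ) (h : i + 1 < n) : FreeGroup (Fin n) →* FreeGroup (Fin n) :=
  FreeGroup.lift (fun j : Fin n =>
    if j.val = i then
      FreeGroup.of (⟨i + 1, h⟩ : Fin n) * FreeGroup.of (⟨i, Nat.lt_of_succ_lt h⟩ : Fin n) *
        (FreeGroup.of (⟨i + 1, h⟩ : Fin n))⁻¹
    else if j.val = i + 1 then FreeGroup.of (⟨i, Nat.lt_of_succ_lt h⟩ : Fin n)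
    else FreeGroup.of j)

/-- The endomorphism 𝔰_i of the free group on `n` generators:
`x_i ↦ x_{i+1}`, `x_{i+1} ↦ x_i`, other generators fixed. -/
def smap (n i : ℕ) (h : i + 1 < n) : FreeGroup (Fin n) →* FreeGroup (Fin n) :=
  FreeGroup.lift (fun j : Fin n =>
    if j.val = i then FreeGroup.of (⟨i + 1, h⟩ : Fin n)
    else if j.val = i + 1 then FreeGroup.of (⟨i, Nat.lt_of_succ_lt h⟩ : Fin n)
    else FreeGroup.of j)

/-! Both sides are lifts, so it suffices to compare them on generators. Only `x_i`, `x_{i+1}`,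
`x_{i+2}` move: both sides send them to `x_{i+2} x_i x_{i+2}⁻¹`, `x_{i+1} x_i x_{i+1}⁻¹` and `x_i`
respectively, and fix all other generators. -/

open FreeGroup

section

variable {n i : ℕ}

@[simp]
lemma rmap_of_left (h : i + 1 < n) :
    rmap n i h (of ⟨i, by omega⟩) = of ⟨i + 1, h⟩ * of ⟨i, by omega⟩ * (of ⟨i + 1, h⟩)⁻¹ := by
  simp [rmap]

@[simp]
lemma rmap_of_right (h : i + 1 < n) : rmap n i h (of ⟨i + 1, h⟩) = of ⟨i, by omega⟩ := by
  simp [rmap]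

lemma rmap_of_of_ne (h : i + 1 < n) {j : Fin n} (hi : j.val ≠ i) (hi₁ : j.val ≠ i + 1) :
    rmap n i h (of j) = of j := by
  simp [rmap, hi, hi₁]

@[simp]
lemma smap_of_left (h : i + 1 < n) : smap n i h (of ⟨i, by omega⟩) = of ⟨i + 1, h⟩ := by
  simp [smap]

@[simp]
lemma smap_of_right (h : i + 1 < n) : smap n i h (of ⟨i + 1, h⟩) = of ⟨i, by omega⟩ := by
  simp [smap]

lemma smap_of_of_ne (h : i + 1 < n) {j : Fin n} (hi : j.val ≠ i) (hi₁ : j.val ≠ i + 1) :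
    smap n i h (of j) = of j := by
  simp [smap, hi, hi₁]

end

theorem stmt14 (n i : ℕ) (h : i + 2 < n) :
    (rmap n i (by omega)).comp ((rmap n (i + 1) (by omega)).comp (smap n i (by omega))) =
      (smap n (i + 1) (by omega)).comp
        ((rmap n i (by omega)).comp (rmap n (i + 1) (by omega))) := by
  ext ⟨j, hj⟩
  simp only [MonoidHom.comp_apply]
  obtain rfl | rfl | rfl | hfar :
      j = i ∨ j = i + 1 ∨ j = i + 1 + 1 ∨ (j ≠ i ∧ j ≠ i + 1 ∧ j ≠ i + 2) := by omega
  all_goals simp (disch := simp only [ne_eq]; omega) [rmap_of_of_ne, smap_of_of_ne]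
end
end

section
/- (Single two-county nation, arbitrary rank.) Let p, q ≥ 1, N = p + q, and α, β ∈ ℂ with α ≠ 0, β ≠ 0, α + β ≠ 0. Call an index i : Fin N 'top' if i.val < p and 'bottom' otherwise; note every bottom index is larger than every top index. Define width-2 rank-N matrices R and S as follows (all entries not listed are 0). For x, y : Fin N: if x and y are both top, R (x,y) (x,y) = α and S (x,y) (x,y) = 1; if x and y are both bottom, R (x,y) (x,y) = β and S (x,y) (x,y) = -1; if x is bottom and y is top, R (x,y) (x,y) = α + β, R (x,y) (y,x) = α and S (x,y) (y,x) = 1; if x is top and y is bottom, R (x,y) (x,y) = 0, R (x,y) (y,x) = -β and S (x,y) (y,x) = 1. Then the pair (S,R) satisfies the loop braid relations. -/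
open Matrix

noncomputable section

/-!
Both matrices are "diagonal plus swap": `(x, y)` is sent to a multiple of `(x, y)` plus a multiple
of `(y, x)`, with coefficients depending only on whether `x` and `y` are top or bottom. Such a
matrix acts on `(a, b, c)` in the first or second two slots by an explicit two-term formula, so
every entry of the products in the loop braid relations is a polynomial in `α` and `β` that is
determined by the levels of `a`, `b`, `c`. Each of the eight level patterns is then a polynomial
identity.
-/

def diagSwap {N : ℕ} (d s : Fin N → Fin N → ℂ) : Matrix (Fin N × Fin N) (Fin N × Fin N) ℂ :=
  Matrix.of fun P Q =>
    d P.1 P.2 * (if Q = P then 1 else 0) + s P.1 P.2 * (if Q = (P.2, P.1) then 1 else 0)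

def levelFun (p : ℕ) (tt tb bt bb : ℂ) {N : ℕ} (x y : Fin N) : ℂ :=
  if (x : ℕ) < p then (if (y : ℕ) < p then tt else tb) else (if (y : ℕ) < p then bt else bb)

lemma sum_indicator_add_indicator_mul {I : Type*} [Fintype I] [DecidableEq I] (c₁ c₂ : ℂ)
    (i₁ i₂ : I) (f : I → ℂ) :
    ∑ W, (c₁ * (if W = i₁ then 1 else 0) + c₂ * (if W = i₂ then 1 else 0)) * f W
      = c₁ * f i₁ + c₂ * f i₂ := by
  simp [add_mul, ite_mul, Finset.sum_add_distrib]

section diagSwap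

variable {N : ℕ} (d s : Fin N → Fin N → ℂ)

lemma diagSwap_apply_of_ne {a b : Fin N} (hab : a ≠ b) (Q : Fin N × Fin N) :
    diagSwap d s (a, b) Q = if Q = (a, b) then d a b else if Q = (b, a) then s a b else 0 := by
  by_cases hQ : Q = (a, b)
  · have : (a, b) ≠ (b, a) := fun h => hab (Prod.mk.inj h).1
    simp [diagSwap, hQ, this]
  · simp [diagSwap, hQ]

lemma diagSwap_apply_of_eq_zero {a b : Fin N} (hs : s a b = 0) (Q : Fin N × Fin N) :
    diagSwap d s (a, b) Q = if Q = (a, b) then d a b else 0 := by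
  simp [diagSwap, hs]

lemma diagSwap_mul_apply (X : Matrix (Fin N × Fin N) (Fin N × Fin N) ℂ) (a b : Fin N)
    (Q : Fin N × Fin N) :
    (diagSwap d s * X) (a, b) Q = d a b * X (a, b) Q + s a b * X (b, a) Q :=
  sum_indicator_add_indicator_mul _ _ _ _ _

lemma Lone_diagSwap_apply (a b c : Fin N) (Q : Fin N × Fin N × Fin N) :
    Lone (diagSwap d s) (a, b, c) Q
      = d a b * (if Q = (a, b, c) then 1 else 0) + s a b * (if Q = (b, a, c) then 1 else 0) := by
  obtain ⟨x, y, z⟩ := Q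
  by_cases hz : z = c
  · simp [Lone, diagSwap, hz]
  · simp [Lone, diagSwap, hz, Ne.symm hz]

lemma Ltwo_diagSwap_apply (a b c : Fin N) (Q : Fin N × Fin N × Fin N) :
    Ltwo (diagSwap d s) (a, b, c) Q
      = d b c * (if Q = (a, b, c) then 1 else 0) + s b c * (if Q = (a, c, b) then 1 else 0) := by
  obtain ⟨x, y, z⟩ := Q
  by_cases hx : x = a
  · simp [Ltwo, diagSwap, hx]
  · simp [Ltwo, diagSwap, hx, Ne.symm hx]

lemma Lone_diagSwap_mul_apply (X : Matrix (Fin N × Fin N × Fin N) (Fin N × Fin N × Fin N) ℂ)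
    (a b c : Fin N) (Q : Fin N × Fin N × Fin N) :
    (Lone (diagSwap d s) * X) (a, b, c) Q = d a b * X (a, b, c) Q + s a b * X (b, a, c) Q := by
  simp only [Matrix.mul_apply, Lone_diagSwap_apply]
  exact sum_indicator_add_indicator_mul _ _ _ _ _

lemma Ltwo_diagSwap_mul_apply (X : Matrix (Fin N × Fin N × Fin N) (Fin N × Fin N × Fin N) ℂ)
    (a b c : Fin N) (Q : Fin N × Fin N × Fin N) :
    (Ltwo (diagSwap d s) * X) (a, b, c) Q = d b c * X (a, b, c) Q + s b c * X (a, c, b) Q := by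
  simp only [Matrix.mul_apply, Ltwo_diagSwap_apply]
  exact sum_indicator_add_indicator_mul _ _ _ _ _

end diagSwap

lemma diagSwap_levelFun_eq {N : ℕ} (p : ℕ) (dtt dbt dbb stb sbt : ℂ) :
    diagSwap (N := N) (levelFun p dtt 0 dbt dbb) (levelFun p 0 stb sbt 0) = Matrix.of fun P Q =>
      if P.1.val < p ∧ P.2.val < p then (if Q = P then dtt else 0)
      else if ¬ P.1.val < p ∧ ¬ P.2.val < p then (if Q = P then dbb else 0)
      else if ¬ P.1.val < p ∧ P.2.val < p then
        (if Q = P then dbt else if Q = (P.2, P.1) then sbt else 0)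
      else (if Q = (P.2, P.1) then stb else 0) := by
  ext ⟨x, y⟩ Q
  by_cases hx : (x : ℕ) < p <;> by_cases hy : (y : ℕ) < p
  · rw [diagSwap_apply_of_eq_zero _ _ (by simp [levelFun, hx, hy])]
    simp [levelFun, hx, hy]
  · have hxy : x ≠ y := by rintro rfl; omega
    rw [diagSwap_apply_of_ne _ _ hxy]
    by_cases hQ : Q = (x, y) <;> simp [levelFun, hx, hy, hQ, hxy]
  · rw [diagSwap_apply_of_ne _ _ (by rintro rfl; omega)]
    simp [levelFun, hx, hy, not_lt.mp hx]
  · rw [diagSwap_apply_of_eq_zero _ _ (by simp [levelFun, hx, hy])]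
    simp [levelFun, hx, hy]

lemma loopBraid_diagSwap_levelFun {N : ℕ} (p : ℕ) (α β : ℂ) :
    LoopBraid (N := N) (diagSwap (levelFun p 1 0 0 (-1)) (levelFun p 0 1 1 0))
      (diagSwap (levelFun p α 0 (α + β) β) (levelFun p 0 (-β) α 0)) := by
  refine ⟨?_, ?_, ?_, ?_, ?_⟩
  · ext ⟨a, b⟩ Q
    rw [diagSwap_mul_apply, Matrix.one_apply]
    simp only [diagSwap, Matrix.of_apply, eq_comm (a := ((a, b) : Fin N × Fin N))]
    by_cases ha : (a : ℕ) < p <;> by_cases hb : (b : ℕ) < p <;>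
      simp only [levelFun, ha, hb, if_true, if_false] <;> ring
  all_goals
    ext ⟨a, b, c⟩ Q
    simp only [Matrix.mul_assoc, Lone_diagSwap_mul_apply, Ltwo_diagSwap_mul_apply,
      Lone_diagSwap_apply, Ltwo_diagSwap_apply]
    by_cases ha : (a : ℕ) < p <;> by_cases hb : (b : ℕ) < p <;> by_cases hc : (c : ℕ) < p <;>
      simp only [levelFun, ha, hb, hc, if_true, if_false] <;> ring

theorem stmt16_general (p q : ℕ)
    (α β : ℂ)
    (R S : Matrix (Fin (p + q) × Fin (p + q)) (Fin (p + q) × Fin (p + q)) ℂ)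
    (hR : R = Matrix.of fun P Q =>
      if P.1.val < p ∧ P.2.val < p then (if Q = P then α else 0)
      else if ¬ P.1.val < p ∧ ¬ P.2.val < p then (if Q = P then β else 0)
      else if ¬ P.1.val < p ∧ P.2.val < p then
        (if Q = P then α + β else if Q = (P.2, P.1) then α else 0)
      else (if Q = (P.2, P.1) then -β else 0))
    (hS : S = Matrix.of fun P Q =>
      if P.1.val < p ∧ P.2.val < p then (if Q = P then 1 else 0)
      else if ¬ P.1.val < p ∧ ¬ P.2.val < p then (if Q = P then -1 else 0)
      else (if Q = (P.2, P.1) then 1 else 0)) :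
    LoopBraid S R := by
  have hR' : R = diagSwap (levelFun p α 0 (α + β) β) (levelFun p 0 (-β) α 0) := by
    rw [hR, diagSwap_levelFun_eq]
  have hS' : S = diagSwap (levelFun p 1 0 0 (-1)) (levelFun p 0 1 1 0) := by
    subst hS
    rw [diagSwap_levelFun_eq]
    ext ⟨x, y⟩ Q
    simp only [Matrix.of_apply]
    -- the one case that is not `rfl` has `Q = (x, y) = (y, x)` with `x`, `y` on different levels
    split_ifs <;> first | rfl | (subst_vars; simp only [Prod.mk.injEq] at *; omega)
  rw [hR', hS']
  exact loopBraid_diagSwap_levelFun p α β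

theorem stmt16 (p q : ℕ) (hp : 1 ≤ p) (hq : 1 ≤ q)
    (α β : ℂ) (hα : α ≠ 0) (hβ : β ≠ 0) (hab : α + β ≠ 0)
    (R S : Matrix (Fin (p + q) × Fin (p + q)) (Fin (p + q) × Fin (p + q)) ℂ)
    (hR : R = Matrix.of fun P Q =>
      if P.1.val < p ∧ P.2.val < p then (if Q = P then α else 0)
      else if ¬ P.1.val < p ∧ ¬ P.2.val < p then (if Q = P then β else 0)
      else if ¬ P.1.val < p ∧ P.2.val < p then
        (if Q = P then α + β else if Q = (P.2, P.1) then α else 0)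
      else (if Q = (P.2, P.1) then -β else 0))
    (hS : S = Matrix.of fun P Q =>
      if P.1.val < p ∧ P.2.val < p then (if Q = P then 1 else 0)
      else if ¬ P.1.val < p ∧ ¬ P.2.val < p then (if Q = P then -1 else 0)
      else (if Q = (P.2, P.1) then 1 else 0)) :
    LoopBraid S R :=
  stmt16_general p q α β R S hR hS
end
end
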